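/- arXiv:2009.07439 — 7 statements merged into one kernel-verified Lean document; each statement's English description precedes it below -/
import Mathlib

section
/- Consider the sparse-dense (SD) linear network loss L(U_1,…,U_s,W_1,…,W_s) = (1/2)‖Σ_{i=1}^s U_i W_i Z_i − Y‖_F². If p_i ≥ d_i for every i ∈ {1,…,s}, then L satisfies Property P: for every initial parameter θ_0 there exists a continuous path θ : [0,1) → dom(L) with θ(0) = θ_0, t ↦ L(θ(t)) non-increasing on [0,1), and lim_{t→1} L(θ(t)) = inf L. In particular, L has no spurious valleys and no spurious strict minima. -/
open scoped BigOperators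

/-- Squared Frobenius norm of a real matrix. -/
noncomputable def frobSq {m n : Type*} [Fintype m] [Fintype n] (M : Matrix m n ℝ) : ℝ :=
  ∑ i, ∑ j, (M i j) ^ 2

section Aux


-- injective linear map between fd spaces
lemma exists_inj_lm (V W : Type*) [AddCommGroup V] [Module ℝ V] [FiniteDimensional ℝ V]
    [AddCommGroup W] [Module ℝ W] [FiniteDimensional ℝ W]
    (h : Module.finrank ℝ V ≤ Module.finrank ℝ W) :
    ∃ j : V →ₗ[ℝ] W, Function.Injective j := by
  set kV := Module.finrank ℝ V
  set kW := Module.finrank ℝ W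
  let bV := Module.finBasis ℝ V
  let bW := Module.finBasis ℝ W
  let mid : (Fin kV → ℝ) →ₗ[ℝ] (Fin kW → ℝ) :=
    { toFun := fun x j => if h2 : (j : ℕ) < kV then x ⟨j, h2⟩ else 0
      map_add' := by intro x y; funext j; by_cases h2 : (j : ℕ) < kV <;> simp [h2]
      map_smul' := by intro c x; funext j; by_cases h2 : (j : ℕ) < kV <;> simp [h2] }
  have hmid : Function.Injective mid := by
    intro x y hxy
    funext i
    have := congrFun hxy (Fin.castLE h i)
    simpa [mid, Fin.castLE, i.isLt] using this
  refine ⟨(bW.equivFun.symm.toLinearMap.comp mid).comp bV.equivFun.toLinearMap, ?_⟩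
  simp only [LinearMap.coe_comp, LinearEquiv.coe_coe]
  exact bW.equivFun.symm.injective.comp (hmid.comp bV.equivFun.injective)

lemma lemA (dy p d : ℕ) (hpd : d ≤ p) (U : Matrix (Fin dy) (Fin p) ℝ)
    (W : Matrix (Fin p) (Fin d) ℝ) :
    ∃ (Ub : Matrix (Fin dy) (Fin p) ℝ) (N : Matrix (Fin p) (Fin d) ℝ)
      (Wi : Matrix (Fin d) (Fin p) ℝ),
      Ub * W = U * W ∧ Ub * N = 0 ∧ Wi * (W + N) = 1 := by
  classical
  set w := Matrix.toLin' W with hw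
  set u := Matrix.toLin' U with hu
  set R := LinearMap.range w with hR
  set K := LinearMap.ker w with hK
  obtain ⟨C, hC⟩ := R.exists_isCompl
  obtain ⟨K', hK'⟩ := K.exists_isCompl
  have hdim1 : Module.finrank ℝ R + Module.finrank ℝ C = p := by
    have := Submodule.finrank_add_eq_of_isCompl hC
    simpa using this
  have hdim2 : Module.finrank ℝ R + Module.finrank ℝ K = d := by
    have := LinearMap.finrank_range_add_finrank_ker w
    simpa [hR, hK, add_comm] using this
  have hKC : Module.finrank ℝ K ≤ Module.finrank ℝ C := by omega
  obtain ⟨j, hj⟩ := exists_inj_lm (↥K) (↥C) hKC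
  set pR : (Fin p → ℝ) →ₗ[ℝ] (Fin p → ℝ) := R.subtype.comp (R.projectionOnto C hC) with hpR
  set pK : (Fin d → ℝ) →ₗ[ℝ] ↥K := K.projectionOnto K' hK' with hpK
  set N' : (Fin d → ℝ) →ₗ[ℝ] (Fin p → ℝ) := (C.subtype.comp j).comp pK with hN'
  set Ub' : (Fin p → ℝ) →ₗ[ℝ] (Fin dy → ℝ) := u.comp pR with hUb'
  have hpR_left : ∀ x, pR (w x) = w x := by
    intro x
    have h0 : (R.projectionOnto C hC) (w x) =
        (⟨w x, LinearMap.mem_range_self w x⟩ : R) :=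
      Submodule.projectionOnto_apply_left hC (⟨w x, LinearMap.mem_range_self w x⟩ : R)
    simp [hpR, h0]
  have hpR_right : ∀ (c : C), pR (c : Fin p → ℝ) = 0 := by
    intro c
    simp [hpR, Submodule.projectionOnto_apply_right hC c]
  have key1 : Ub'.comp w = u.comp w := LinearMap.ext fun x => by
    simp [hUb', hpR_left x]
  have key2 : Ub'.comp N' = 0 := LinearMap.ext fun x => by
    have h0 := hpR_right (j (pK x))
    simp only [hUb', hN', LinearMap.comp_apply, LinearMap.zero_apply, Submodule.coe_subtype] at *
    rw [h0]; simp
  have hNmem : ∀ x, N' x ∈ C := fun x => by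
    simp only [hN', LinearMap.comp_apply, Submodule.coe_subtype]
    exact (j (pK x)).2
  -- injectivity of w + N'
  have hinj : LinearMap.ker (Matrix.toLin' (W + LinearMap.toMatrix' N')) = ⊥ := by
    rw [map_add, Matrix.toLin'_toMatrix', ← hw]
    rw [LinearMap.ker_eq_bot']
    intro x hx
    have hsum : w x + N' x = 0 := hx
    have hmem : w x ∈ R ⊓ C := by
      refine ⟨LinearMap.mem_range_self w x, ?_⟩
      have hwn : w x = -N' x := eq_neg_of_add_eq_zero_left hsum
      rw [hwn]
      exact C.neg_mem (hNmem x)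
    have hw0 : w x = 0 := by
      rw [hC.inf_eq_bot] at hmem
      simpa using hmem
    have hN0 : N' x = 0 := by rw [hw0, zero_add] at hsum; exact hsum
    have hxK : x ∈ K := LinearMap.mem_ker.mpr hw0
    have hjz : j (pK x) = 0 := by
      have : (C.subtype) (j (pK x)) = 0 := hN0
      exact_mod_cast Subtype.coe_injective (by simpa using this)
    have hpKz : pK x = 0 := hj (by simpa using hjz)
    have hpKx : pK x = ⟨x, hxK⟩ := Submodule.projectionOnto_apply_left hK' ⟨x, hxK⟩
    have : (⟨x, hxK⟩ : K) = 0 := hpKx ▸ hpKz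
    simpa using congrArg Subtype.val this
  obtain ⟨g, hg⟩ := (Matrix.toLin' (W + LinearMap.toMatrix' N')).exists_leftInverse_of_injective hinj
  have eW : W = LinearMap.toMatrix' w := by rw [hw, LinearMap.toMatrix'_toLin']
  have eU : U = LinearMap.toMatrix' u := by rw [hu, LinearMap.toMatrix'_toLin']
  have hg2 : g ∘ₗ (w + N') = LinearMap.id := by
    rw [← hg]; congr 1; rw [map_add, Matrix.toLin'_toMatrix', hw]
  refine ⟨LinearMap.toMatrix' Ub', LinearMap.toMatrix' N', LinearMap.toMatrix' g, ?_, ?_, ?_⟩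
  · conv_lhs => rw [eW]
    conv_rhs => rw [eU, eW]
    rw [← LinearMap.toMatrix'_comp, ← LinearMap.toMatrix'_comp, key1]
  · rw [← LinearMap.toMatrix'_comp, key2, map_zero]
  · conv_lhs => rw [eW]
    rw [show LinearMap.toMatrix' w + LinearMap.toMatrix' N' = LinearMap.toMatrix' (w + N') from (map_add _ _ _).symm,
      ← LinearMap.toMatrix'_comp, hg2, LinearMap.toMatrix'_id]

lemma lemB (s n dy : ℕ) (d : Fin s → ℕ) (Z : ∀ i, Matrix (Fin (d i)) (Fin n) ℝ)
    (Y : Matrix (Fin dy) (Fin n) ℝ) :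
    ∃ Pstar : ∀ i, Matrix (Fin dy) (Fin (d i)) ℝ,
      ∀ Q : ∀ i, Matrix (Fin dy) (Fin (d i)) ℝ,
        frobSq ((∑ i, Pstar i * Z i) - Y) ≤ frobSq ((∑ i, Q i * Z i) - Y) := by
  classical
  set E := EuclideanSpace ℝ (Fin dy × Fin n)
  set T : (∀ i, Matrix (Fin dy) (Fin (d i)) ℝ) →ₗ[ℝ] E :=
    { toFun := fun P => WithLp.toLp 2 (fun q : Fin dy × Fin n => (∑ i, P i * Z i : Matrix (Fin dy) (Fin n) ℝ) q.1 q.2)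
      map_add' := by
        intro P Q
        ext q
        simp [E, Matrix.add_mul, Matrix.add_apply, Finset.sum_add_distrib, Matrix.sum_apply]
      map_smul' := by
        intro c P
        ext q
        simp [E, Matrix.smul_mul, Matrix.smul_apply, Finset.mul_sum, smul_eq_mul, PiLp.smul_apply, Matrix.sum_apply] } with hT
  set yE : E := WithLp.toLp 2 (fun q : Fin dy × Fin n => Y q.1 q.2) with hyE
  have key : ∀ Q, frobSq ((∑ i, Q i * Z i) - Y) = dist (T Q) yE ^ 2 := by
    intro Q
    rw [dist_eq_norm, EuclideanSpace.norm_eq, Real.sq_sqrt (by positivity)]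
    rw [frobSq, Fintype.sum_prod_type (f := fun q : Fin dy × Fin n => ‖(T Q - yE) q‖ ^ 2)]
    apply Finset.sum_congr rfl
    intro i _
    apply Finset.sum_congr rfl
    intro j _
    have : (T Q - yE) (i, j) = (∑ k, Q k * Z k : Matrix (Fin dy) (Fin n) ℝ) i j - Y i j := rfl
    simp [this, Matrix.sub_apply, Real.norm_eq_abs, sq_abs]
  obtain ⟨v, hvS, hvd⟩ := (Submodule.closed_of_finiteDimensional
    (LinearMap.range T)).exists_infDist_eq_dist ⟨0, Submodule.zero_mem _⟩ yE
  obtain ⟨Pstar, rfl⟩ := hvS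
  refine ⟨Pstar, fun Q => ?_⟩
  rw [key, key]
  have h1 : dist yE (T Pstar) ≤ dist yE (T Q) := by
    rw [← hvd]
    exact Metric.infDist_le_dist_of_mem ⟨Q, rfl⟩
  rw [dist_comm (T Pstar) yE, dist_comm (T Q) yE]
  exact pow_le_pow_left₀ dist_nonneg h1 2


-- ramp lemmas
noncomputable def ramp (a t : ℝ) : ℝ := max 0 (min 1 (4*t - a))

lemma ramp_cont (a : ℝ) : Continuous (ramp a) := by
  unfold ramp
  exact continuous_const.max (continuous_const.min (by continuity))

lemma ramp_nonneg (a t : ℝ) : 0 ≤ ramp a t := le_max_left _ _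

lemma ramp_le_one (a t : ℝ) : ramp a t ≤ 1 :=
  max_le zero_le_one (min_le_left _ _)

lemma ramp_mono (a : ℝ) : Monotone (ramp a) := by
  intro x y hxy
  exact max_le_max le_rfl (min_le_min le_rfl (by linarith))

lemma ramp_eq_zero (a t : ℝ) (h : 4*t - a ≤ 0) : ramp a t = 0 :=
  max_eq_left ((min_le_right _ _).trans h)

lemma ramp_eq_one (a t : ℝ) (h : 1 ≤ 4*t - a) : ramp a t = 1 := by
  rw [ramp, min_eq_left h, max_eq_right zero_le_one]

lemma ramp_key1 (t : ℝ) : ramp 1 t * (1 - ramp 0 t) = 0 := by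
  rcases le_total t (1/4) with h | h
  · rw [ramp_eq_zero 1 t (by linarith), zero_mul]
  · rw [ramp_eq_one 0 t (by linarith)]; ring

lemma ramp_key2 (t : ℝ) (h : ramp 2 t ≠ 0) : ramp 1 t = 1 := by
  rcases le_total t (1/2) with h' | h'
  · exact absurd (ramp_eq_zero 2 t (by linarith)) h
  · exact ramp_eq_one 1 t (by linarith)

lemma ramp3_eq_one (t : ℝ) (h : 3/4 ≤ t) : ramp 2 t = 1 := ramp_eq_one 2 t (by linarith)

-- quadratic monotonicity
lemma quad_anti (A B : ℝ) (hA : 0 ≤ A) (hmin : ∀ u : ℝ, A + B ≤ A*u^2 + B*u) :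
    ∀ u v : ℝ, 0 ≤ u → u ≤ v → v ≤ 1 → A*v^2 + B*v ≤ A*u^2 + B*u := by
  have hA1 : (0:ℝ) < A + 1 := by linarith
  have hB : B = -(2*A) := by
    set x : ℝ := -(2*A+B)/(A+1) with hxdef
    have hne : (A+1) ≠ 0 := ne_of_gt hA1
    have hx : (A+1) * x = -(2*A+B) := by rw [hxdef]; field_simp
    have h1 := hmin (1 + x)
    have h3 : 0 ≤ A*x^2 + (2*A+B)*x := by nlinarith [h1]
    have hx2 : ((A+1)*x)^2 = (2*A+B)^2 := by rw [hx]; ring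
    have h4 : (A+1)^2*(A*x^2+(2*A+B)*x) = -((2*A+B)^2) := by
      linear_combination (A*(A+1)*x + (2*A+B)) * hx
    have h2 : (2*A+B)^2 ≤ 0 := by
      nlinarith [mul_nonneg (mul_pos hA1 hA1).le h3]
    nlinarith [sq_nonneg (2*A+B)]
  intro u v hu huv hv1
  rw [hB]
  nlinarith [mul_nonneg hA (mul_nonneg (sub_nonneg.2 huv) (by linarith : (0:ℝ) ≤ 2 - u - v))]

end Aux

/-- For the sparse-dense linear network loss
`L(U₁,…,U_s, W₁,…,W_s) = (1/2)‖∑ᵢ Uᵢ Wᵢ Zᵢ − Y‖_F²`, if `pᵢ ≥ dᵢ` for every `i`, then `L`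
satisfies Property P (a continuous non-increasing path from any initialization whose loss
tends to `inf L`); in particular it has no spurious valleys and no spurious strict minima. -/
theorem sd_linear_overparam_propertyP
    (s n dy : ℕ) (p d : Fin s → ℕ)
    (Z : (i : Fin s) → Matrix (Fin (d i)) (Fin n) ℝ)
    (Y : Matrix (Fin dy) (Fin n) ℝ)
    (hpd : ∀ i, d i ≤ p i)
    (L : (((i : Fin s) → Fin dy → Fin (p i) → ℝ) ×
          ((i : Fin s) → Fin (p i) → Fin (d i) → ℝ)) → ℝ)
    (hL : ∀ θ, L θ = (1 / 2) * frobSq ((∑ i, Matrix.of (θ.1 i) * Matrix.of (θ.2 i) * Z i) - Y)) :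
    -- Property P
    (∀ θ0 : (((i : Fin s) → Fin dy → Fin (p i) → ℝ) ×
             ((i : Fin s) → Fin (p i) → Fin (d i) → ℝ)),
      ∃ γ : ℝ → (((i : Fin s) → Fin dy → Fin (p i) → ℝ) ×
                 ((i : Fin s) → Fin (p i) → Fin (d i) → ℝ)),
        γ 0 = θ0 ∧ ContinuousOn γ (Set.Ico (0 : ℝ) 1) ∧
        AntitoneOn (fun t => L (γ t)) (Set.Ico (0 : ℝ) 1) ∧
        Filter.Tendsto (fun t => L (γ t)) (nhdsWithin 1 (Set.Ico (0 : ℝ) 1))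
          (nhds (⨅ θ, L θ))) ∧
    -- no spurious valleys
    (∀ (α : ℝ) θ0, L θ0 ≤ α →
      ¬ (⨅ θ, L θ) < sInf (L '' pathComponentIn {θ | L θ ≤ α} θ0)) ∧
    -- no spurious strict minima
    (∀ θ0, (∃ ε > (0 : ℝ), ∀ θ, θ ≠ θ0 → ‖θ - θ0‖ ≤ ε → L θ0 < L θ) →
      L θ0 = ⨅ θ, L θ) := by
  classical
  obtain ⟨Pstar, hPstar⟩ := lemB s n dy d Z Y
  set m : ℝ := (1/2) * frobSq ((∑ i, Pstar i * Z i) - Y) with hm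
  have hLlb : ∀ θ, m ≤ L θ := by
    intro θ
    rw [hL θ]
    have := hPstar (fun i => Matrix.of (θ.1 i) * Matrix.of (θ.2 i))
    rw [hm]; linarith
  have core : ∀ θ0 : (((i : Fin s) → Fin dy → Fin (p i) → ℝ) ×
             ((i : Fin s) → Fin (p i) → Fin (d i) → ℝ)),
      ∃ γ : ℝ → (((i : Fin s) → Fin dy → Fin (p i) → ℝ) ×
                 ((i : Fin s) → Fin (p i) → Fin (d i) → ℝ)),
        γ 0 = θ0 ∧ ContinuousOn γ (Set.Ico (0 : ℝ) 1) ∧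
        AntitoneOn (fun t => L (γ t)) (Set.Ico (0 : ℝ) 1) ∧
        (∀ t : ℝ, 3/4 ≤ t → L (γ t) = m) := by
    intro θ0
    have hA := fun i => lemA dy (p i) (d i) (hpd i) (Matrix.of (θ0.1 i)) (Matrix.of (θ0.2 i))
    choose Ub N Wi hUW hUN hWi using hA
    set P0 : (i : Fin s) → Matrix (Fin dy) (Fin (d i)) ℝ :=
      fun i => Matrix.of (θ0.1 i) * Matrix.of (θ0.2 i) with hP0
    set Δ : (i : Fin s) → Matrix (Fin dy) (Fin (d i)) ℝ := fun i => Pstar i - P0 i with hΔ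
    set X : (i : Fin s) → Matrix (Fin dy) (Fin (p i)) ℝ := fun i => Δ i * Wi i with hX
    set γ : ℝ → (((i : Fin s) → Fin dy → Fin (p i) → ℝ) ×
                 ((i : Fin s) → Fin (p i) → Fin (d i) → ℝ)) := fun t =>
      ((fun i => fun j k => θ0.1 i j k + ramp 0 t * (Ub i j k - θ0.1 i j k) + ramp 2 t * X i j k),
       (fun i => fun k l => θ0.2 i k l + ramp 1 t * N i k l)) with hγ
    have hγ0 : γ 0 = θ0 := by
      rw [hγ]
      have e0 : ramp 0 0 = 0 := ramp_eq_zero 0 0 (by norm_num)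
      have e1 : ramp 1 0 = 0 := ramp_eq_zero 1 0 (by norm_num)
      have e2 : ramp 2 0 = 0 := ramp_eq_zero 2 0 (by norm_num)
      simp [e0, e1, e2]
    have hof1 : ∀ t i, Matrix.of ((γ t).1 i) =
        Matrix.of (θ0.1 i) + ramp 0 t • (Ub i - Matrix.of (θ0.1 i)) + ramp 2 t • X i := by
      intro t i
      ext j k
      simp [hγ, Matrix.add_apply, Matrix.smul_apply, Matrix.sub_apply, smul_eq_mul]
    have hof2 : ∀ t i, Matrix.of ((γ t).2 i) = Matrix.of (θ0.2 i) + ramp 1 t • N i := by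
      intro t i
      ext k l
      simp [hγ, Matrix.add_apply, Matrix.smul_apply, smul_eq_mul]
    have hprod : ∀ t i, Matrix.of ((γ t).1 i) * Matrix.of ((γ t).2 i)
        = P0 i + ramp 2 t • Δ i := by
      intro t i
      rw [hof1, hof2]
      have hXWN : X i * (Matrix.of (θ0.2 i) + N i) = Δ i := by
        rw [hX, Matrix.mul_assoc, hWi i, Matrix.mul_one]
      have expand : (Matrix.of (θ0.1 i) + ramp 0 t • (Ub i - Matrix.of (θ0.1 i)) + ramp 2 t • X i) *
          (Matrix.of (θ0.2 i) + ramp 1 t • N i)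
          = P0 i + (ramp 1 t * (1 - ramp 0 t)) • (Matrix.of (θ0.1 i) * N i)
            + ramp 2 t • (X i * Matrix.of (θ0.2 i))
            + (ramp 2 t * ramp 1 t) • (X i * N i) := by
        simp only [Matrix.add_mul, Matrix.mul_add, Matrix.smul_mul, Matrix.mul_smul,
          Matrix.sub_mul, hUW i, hUN i, hP0, smul_smul, smul_sub, smul_zero]
        module
      rw [expand, ramp_key1, zero_smul]
      rcases eq_or_ne (ramp 2 t) 0 with hc | hc
      · simp [hc]
      · rw [ramp_key2 t hc, mul_one]
        have hsplit : X i * Matrix.of (θ0.2 i) + X i * N i = Δ i := by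
          rw [← Matrix.mul_add, hXWN]
        rw [add_zero, add_assoc, ← smul_add, hsplit]
    set R0 : Matrix (Fin dy) (Fin n) ℝ := (∑ i, P0 i * Z i) - Y with hR0
    set D : Matrix (Fin dy) (Fin n) ℝ := ∑ i, Δ i * Z i with hD
    have hRD : ∀ u : ℝ, (∑ i, (P0 i + u • Δ i) * Z i) - Y = R0 + u • D := by
      intro u
      rw [hR0, hD]
      simp only [Matrix.add_mul, Matrix.smul_mul, Finset.sum_add_distrib, ← Finset.smul_sum]
      abel
    have hLγ : ∀ t, L (γ t) = (1/2) * frobSq (R0 + ramp 2 t • D) := by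
      intro t
      rw [hL]
      congr 1
      rw [← hRD (ramp 2 t)]
      have hsum : (∑ i, Matrix.of ((γ t).1 i) * Matrix.of ((γ t).2 i) * Z i)
          = ∑ i, (P0 i + ramp 2 t • Δ i) * Z i :=
        Finset.sum_congr rfl (fun i _ => by rw [hprod t i])
      rw [hsum]
    set S1 : ℝ := ∑ i, ∑ j, R0 i j * D i j with hS1
    set S2 : ℝ := frobSq D with hS2
    have hS2nn : 0 ≤ S2 := by
      rw [hS2, frobSq]
      apply Finset.sum_nonneg; intro i _
      apply Finset.sum_nonneg; intro j _
      positivity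
    have hfq : ∀ u : ℝ, (1/2) * frobSq (R0 + u • D)
        = (1/2) * frobSq R0 + S1 * u + (S2/2) * u^2 := by
      intro u
      have hent : ∀ i j, ((R0 + u • D) i j)^2
          = (R0 i j)^2 + (2*u) * (R0 i j * D i j) + u^2 * (D i j)^2 := by
        intro i j
        simp only [Matrix.add_apply, Matrix.smul_apply, smul_eq_mul]
        ring
      rw [frobSq]
      simp only [hent, Finset.sum_add_distrib, ← Finset.mul_sum]
      rw [hS1, hS2, frobSq, frobSq]
      ring
    have hP1 : ∀ i, P0 i + (1:ℝ) • Δ i = Pstar i := by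
      intro i
      rw [one_smul, hΔ]
      module
    have hsum1 : (∑ i, (P0 i + (1:ℝ) • Δ i) * Z i) = ∑ i, Pstar i * Z i :=
      Finset.sum_congr rfl (fun i _ => by rw [hP1 i])
    have hmin : ∀ u : ℝ, (1/2) * frobSq (R0 + (1:ℝ) • D) ≤ (1/2) * frobSq (R0 + u • D) := by
      intro u
      have h1 := hPstar (fun i => P0 i + u • Δ i)
      rw [← hRD u, ← hRD 1, hsum1]
      linarith
    have hmval : (1/2) * frobSq (R0 + (1:ℝ) • D) = m := by
      rw [← hRD 1, hsum1, hm]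
    have hanti : AntitoneOn (fun t => L (γ t)) (Set.Ico (0 : ℝ) 1) := by
      intro t1 ht1 t2 ht2 h12
      simp only
      rw [hLγ, hLγ, hfq, hfq]
      have key := quad_anti (S2/2) S1 (by linarith)
        (fun u => by
          have := hmin u
          rw [hfq, hfq] at this
          linarith) (ramp 2 t1) (ramp 2 t2) (ramp_nonneg 2 t1) (ramp_mono 2 h12)
        (ramp_le_one 2 t2)
      linarith
    have htail : ∀ t : ℝ, 3/4 ≤ t → L (γ t) = m := by
      intro t ht
      rw [hLγ, ramp3_eq_one t ht, ← hmval]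
    have hcont : Continuous γ := by
      rw [hγ]
      apply Continuous.prodMk
      · apply continuous_pi; intro i
        apply continuous_pi; intro j
        apply continuous_pi; intro k
        exact (continuous_const.add ((ramp_cont 0).mul continuous_const)).add
          ((ramp_cont 2).mul continuous_const)
      · apply continuous_pi; intro i
        apply continuous_pi; intro k
        apply continuous_pi; intro l
        exact continuous_const.add ((ramp_cont 1).mul continuous_const)
    exact ⟨γ, hγ0, hcont.continuousOn, hanti, htail⟩
  have hinf : (⨅ θ, L θ) = m := by
    obtain ⟨γ0, h0, hcont0, hanti0, htail0⟩ := core 0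
    have hbdd : BddBelow (Set.range L) := ⟨m, by rintro x ⟨θ, rfl⟩; exact hLlb θ⟩
    apply le_antisymm
    · exact (ciInf_le hbdd (γ0 (3/4))).trans_eq (htail0 (3/4) le_rfl)
    · exact le_ciInf hLlb
  refine ⟨?_, ?_, ?_⟩
  · -- Property P
    intro θ0
    obtain ⟨γ, hγ0, hcont, hanti, htail⟩ := core θ0
    refine ⟨γ, hγ0, hcont, hanti, ?_⟩
    rw [hinf]
    apply Filter.Tendsto.congr' _ tendsto_const_nhds
    filter_upwards [mem_nhdsWithin_of_mem_nhds
      (Ioo_mem_nhds (by norm_num : (3/4:ℝ) < 1) (by norm_num : (1:ℝ) < 2))] with t ht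
    exact (htail t ht.1.le).symm
  · -- no spurious valleys
    intro α θ0 hα
    rw [hinf, not_lt]
    obtain ⟨γ, hγ0, hcont, hanti, htail⟩ := core θ0
    have hmem34 : γ (3/4) ∈ pathComponentIn {θ | L θ ≤ α} θ0 := by
      have hmaps : ∀ u : unitInterval, (u : ℝ) * (3/4) ∈ Set.Ico (0:ℝ) 1 := by
        intro u
        constructor
        · exact mul_nonneg u.2.1 (by norm_num)
        · nlinarith [u.2.1, u.2.2]
      refine ⟨⟨⟨fun u => γ ((u : ℝ) * (3/4)), ?_⟩, ?_, ?_⟩, ?_⟩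
      · exact hcont.comp_continuous (continuous_subtype_val.mul continuous_const) hmaps
      · simp [hγ0]
      · norm_num
      · intro u
        have h1 : L (γ ((u : ℝ) * (3/4))) ≤ L (γ 0) :=
          hanti ⟨le_rfl, zero_lt_one⟩ (hmaps u) (hmaps u).1
        rw [hγ0] at h1
        exact Set.mem_setOf_eq ▸ h1.trans hα
    have hbdd : BddBelow (L '' pathComponentIn {θ | L θ ≤ α} θ0) :=
      ⟨m, by rintro x ⟨θ, _, rfl⟩; exact hLlb θ⟩
    exact (csInf_le hbdd ⟨_, hmem34, rfl⟩).trans_eq (htail _ le_rfl)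
  · -- no spurious strict minima
    rintro θ0 ⟨ε, hε, hstrict⟩
    obtain ⟨γ, hγ0, hcont, hanti, htail⟩ := core θ0
    rw [hinf]
    haveI : PreconnectedSpace (Set.Ico (0:ℝ) 1) := Subtype.preconnectedSpace isPreconnected_Ico
    set g : (Set.Ico (0:ℝ) 1) → _ := fun x => γ x with hg
    have hgc : Continuous g := continuousOn_iff_continuous_restrict.mp hcont
    set A : Set (Set.Ico (0:ℝ) 1) := {x | g x = θ0} with hAdef
    have hforce : ∀ x : (Set.Ico (0:ℝ) 1), dist (g x) θ0 < ε → g x = θ0 := by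
      intro x hx
      by_contra hne
      have h1 : L θ0 < L (g x) := hstrict _ hne (by rw [← dist_eq_norm]; exact hx.le)
      have h2 : L (g x) ≤ L (γ 0) := hanti ⟨le_rfl, zero_lt_one⟩ x.2 x.2.1
      rw [hγ0] at h2
      linarith
    have hopen : IsOpen A := by
      have hAeq : A = g ⁻¹' (Metric.ball θ0 ε) := by
        ext x
        simp only [hAdef, Set.mem_setOf_eq, Set.mem_preimage, Metric.mem_ball]
        constructor
        · intro h; rw [h]; simpa using hε
        · exact hforce x
      rw [hAeq]
      exact Metric.isOpen_ball.preimage hgc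
    have hclosed : IsClosed A := isClosed_singleton.preimage hgc
    have hne : A.Nonempty := ⟨⟨0, ⟨le_rfl, zero_lt_one⟩⟩, by
      simp only [hAdef, hg, Set.mem_setOf_eq]
      exact hγ0⟩
    have hAu : A = Set.univ := IsClopen.eq_univ ⟨hclosed, hopen⟩ hne
    have h34 : γ (3/4) = θ0 := by
      have := hAu ▸ Set.mem_univ (⟨3/4, by norm_num⟩ : (Set.Ico (0:ℝ) 1))
      exact this
    rw [← h34]
    exact htail (3/4) le_rfl
end

section
/- Consider the sparse-dense (SD) linear network loss with scalar output d_y = 1, i.e., L(u_1,…,u_p, w_1,…,w_p) = (1/2)‖Σ_{i=1}^p u_i w_i^T Z_i − Y‖_2² where u_i ∈ ℝ, w_i ∈ ℝ^{d_i}, Z_i ∈ ℝ^{d_i×n}, Y ∈ ℝ^{1×n}. Then L satisfies Property P: for every initial parameter θ_0 there exists a continuous path θ : [0,1) → dom(L) with θ(0) = θ_0, t ↦ L(θ(t)) non-increasing on [0,1), and lim_{t→1} L(θ(t)) = inf L. In particular, L has no spurious strict minima. -/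
open scoped BigOperators

private lemma least_squares' {E F : Type*} [NormedAddCommGroup E] [Module ℝ E]
    [NormedAddCommGroup F] [InnerProductSpace ℝ F] [FiniteDimensional ℝ F]
    (T : E →ₗ[ℝ] F) (y : F) : ∃ x : E, ∀ x' : E, ‖T x - y‖ ≤ ‖T x' - y‖ := by
  set K := LinearMap.range T with hK
  obtain ⟨x, hx⟩ := LinearMap.mem_range.mp (K.orthogonalProjectionOnto y).2
  refine ⟨x, fun x' => ?_⟩
  have h1 : ‖y - K.orthogonalProjectionOnto y‖ = ⨅ z : K, ‖y - z‖ := by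
    rw [← Submodule.starProjection_apply]; exact Submodule.starProjection_minimal y
  have h2 : (⨅ z : K, ‖y - (z : F)‖) ≤ ‖y - T x'‖ :=
    ciInf_le ⟨0, by rintro _ ⟨z, rfl⟩; positivity⟩ (⟨T x', LinearMap.mem_range_self T x'⟩ : K)
  rw [norm_sub_rev (T x), norm_sub_rev (T x'), hx, h1]
  exact h2

private lemma quad_coeff' {a b : ℝ} (ha : 0 ≤ a)
    (h : ∀ s : ℝ, a + b ≤ a * s ^ 2 + b * s) : b = -(2 * a) := by
  rcases eq_or_lt_of_le ha with h0 | h0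
  · have h1 := h 0
    have h2 := h 2
    rw [← h0] at h1 h2 ⊢
    simp at h1 h2 ⊢
    linarith
  · have ha' : a ≠ 0 := ne_of_gt h0
    set B := 2 * a + b with hB
    have hx := h (1 + -(B / (2 * a)))
    have key : a * (1 + -(B / (2 * a))) ^ 2 + b * (1 + -(B / (2 * a)))
        = a + b - B ^ 2 / (4 * a) := by
      field_simp
      ring
    rw [key] at hx
    have h4 : B ^ 2 / (4 * a) ≤ 0 := by linarith
    have h5 : B ^ 2 ≤ 0 := by
      have := (div_nonpos_iff.mp h4)
      rcases this with ⟨h6, h6'⟩ | ⟨h6, h7⟩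
      · nlinarith
      · exact h6
    have : B = 0 := by nlinarith [sq_nonneg B]
    linarith [this]

private lemma quad_antitone' {a c X Y : ℝ} (ha : 0 ≤ a) (hX : 0 ≤ X) (hXY : X ≤ Y)
    (hY : Y ≤ 1) :
    a * Y ^ 2 + -(2 * a) * Y + c ≤ a * X ^ 2 + -(2 * a) * X + c := by
  nlinarith [mul_nonneg (mul_nonneg ha (sub_nonneg.mpr hXY)) (sub_nonneg.mpr hY),
    mul_nonneg (mul_nonneg ha (sub_nonneg.mpr hXY))
      (sub_nonneg.mpr (le_trans hXY hY))]

/-- The scalar-output (`d_y = 1`) sparse-dense linear loss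
`L(u, w) = (1/2)‖∑ᵢ uᵢ wᵢᵀ Zᵢ − Y‖²` satisfies Property P; in particular it has no
spurious strict minima. -/
theorem sd_linear_scalar_output_propertyP
    (p n : ℕ) (d : Fin p → ℕ)
    (Z : (i : Fin p) → Matrix (Fin (d i)) (Fin n) ℝ)
    (Y : Matrix (Fin 1) (Fin n) ℝ)
    (L : ((Fin p → ℝ) × ((i : Fin p) → Fin (d i) → ℝ)) → ℝ)
    (hL : ∀ θ, L θ =
      (1 / 2) * ∑ j, ((∑ i, θ.1 i * ∑ k, θ.2 i k * Z i k j) - Y 0 j) ^ 2) :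
    -- Property P
    (∀ θ0 : (Fin p → ℝ) × ((i : Fin p) → Fin (d i) → ℝ),
      ∃ γ : ℝ → (Fin p → ℝ) × ((i : Fin p) → Fin (d i) → ℝ),
        γ 0 = θ0 ∧ ContinuousOn γ (Set.Ico (0 : ℝ) 1) ∧
        AntitoneOn (fun t => L (γ t)) (Set.Ico (0 : ℝ) 1) ∧
        Filter.Tendsto (fun t => L (γ t)) (nhdsWithin 1 (Set.Ico (0 : ℝ) 1))
          (nhds (⨅ θ, L θ))) ∧
    -- no spurious strict minima
    (∀ θ0, (∃ ε > (0 : ℝ), ∀ θ, θ ≠ θ0 → ‖θ - θ0‖ ≤ ε → L θ0 < L θ) →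
      L θ0 = ⨅ θ, L θ) := by
  classical
  -- the convex reparametrized loss
  set f : ((i : Fin p) → Fin (d i) → ℝ) → ℝ :=
    fun v => (1/2) * ∑ j, ((∑ i, ∑ k, v i k * Z i k j) - Y 0 j)^2 with hfdef
  have hLf : ∀ θ, L θ = f (fun i k => θ.1 i * θ.2 i k) := by
    intro θ
    rw [hL, hfdef]
    have hpt : ∀ j : Fin n, (∑ i, θ.1 i * ∑ k, θ.2 i k * Z i k j)
        = ∑ i, ∑ k, (θ.1 i * θ.2 i k) * Z i k j := by
      intro j
      refine Finset.sum_congr rfl fun i _ => ?_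
      rw [Finset.mul_sum]
      exact Finset.sum_congr rfl fun k _ => by ring
    simp only [hpt]
  -- the least squares minimizer
  set T : ((i : Fin p) → Fin (d i) → ℝ) →ₗ[ℝ] EuclideanSpace ℝ (Fin n) :=
    { toFun := fun v => WithLp.toLp 2 (fun j => ∑ i, ∑ k, v i k * Z i k j)
      map_add' := by
        intro v w
        ext j
        simp [add_mul, Finset.sum_add_distrib]
      map_smul' := by
        intro cc v
        ext j
        simp [Finset.mul_sum, mul_assoc] } with hTdef
  set y : EuclideanSpace ℝ (Fin n) := WithLp.toLp 2 (fun j => Y 0 j) with hydef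
  obtain ⟨vs, hvs⟩ := least_squares' T y
  have hnormsq : ∀ x : EuclideanSpace ℝ (Fin n), ‖x‖^2 = ∑ j, (x j)^2 := by
    intro x
    rw [EuclideanSpace.norm_eq, Real.sq_sqrt (by positivity)]
    exact Finset.sum_congr rfl fun j _ => by rw [Real.norm_eq_abs, sq_abs]
  have hfT : ∀ v, f v = (1/2) * ‖T v - y‖^2 := by
    intro v
    rw [hnormsq, hfdef]
    congr 1
  have hmin : ∀ v, f vs ≤ f v := by
    intro v
    rw [hfT, hfT]
    have h1 := hvs v
    nlinarith [norm_nonneg (T vs - y), norm_nonneg (T v - y)]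
  -- infimum facts
  have hLlb : ∀ θ, 0 ≤ L θ := fun θ => by rw [hL]; positivity
  have hbdd : BddBelow (Set.range L) := ⟨0, by rintro _ ⟨θ, rfl⟩; exact hLlb θ⟩
  have hstar : L (fun _ => (1:ℝ), vs) = f vs := by
    rw [hLf]
    congr 1
    funext i k
    simp
  have hinf : (⨅ θ, L θ) = f vs := by
    apply le_antisymm
    · exact le_of_le_of_eq (ciInf_le hbdd _) hstar
    · exact le_ciInf fun θ => by rw [hLf θ]; exact hmin _
  have part1 : ∀ θ0 : (Fin p → ℝ) × ((i : Fin p) → Fin (d i) → ℝ),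
      ∃ γ : ℝ → (Fin p → ℝ) × ((i : Fin p) → Fin (d i) → ℝ),
        γ 0 = θ0 ∧ ContinuousOn γ (Set.Ico (0 : ℝ) 1) ∧
        AntitoneOn (fun t => L (γ t)) (Set.Ico (0 : ℝ) 1) ∧
        Filter.Tendsto (fun t => L (γ t)) (nhdsWithin 1 (Set.Ico (0 : ℝ) 1))
          (nhds (⨅ θ, L θ)) := by
    intro θ0
    set v0 : (i : Fin p) → Fin (d i) → ℝ := fun i k => θ0.1 i * θ0.2 i k with hv0def
    set e : Fin n → ℝ := fun j => (∑ i, ∑ k, v0 i k * Z i k j) - Y 0 j with hedef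
    set δ : Fin n → ℝ :=
      fun j => (∑ i, ∑ k, vs i k * Z i k j) - (∑ i, ∑ k, v0 i k * Z i k j) with hδdef
    set a : ℝ := (1/2) * ∑ j, (δ j)^2 with hadef
    set b : ℝ := ∑ j, e j * δ j with hbdef
    set c : ℝ := (1/2) * ∑ j, (e j)^2 with hcdef
    have key : ∀ s : ℝ,
        f (fun i k => (1 - s) * v0 i k + s * vs i k) = a * s^2 + b * s + c := by
      intro s
      have hsum : ∀ j, (∑ i, ∑ k, ((1 - s) * v0 i k + s * vs i k) * Z i k j)
          = (1 - s) * (∑ i, ∑ k, v0 i k * Z i k j)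
            + s * (∑ i, ∑ k, vs i k * Z i k j) := by
        intro j
        rw [Finset.mul_sum, Finset.mul_sum, ← Finset.sum_add_distrib]
        refine Finset.sum_congr rfl fun i _ => ?_
        rw [Finset.mul_sum, Finset.mul_sum, ← Finset.sum_add_distrib]
        refine Finset.sum_congr rfl fun k _ => ?_
        ring
      have h2 : ∀ j, ((∑ i, ∑ k, ((1 - s) * v0 i k + s * vs i k) * Z i k j) - Y 0 j)^2
          = (e j)^2 + (2 * (e j * δ j)) * s + ((δ j)^2) * s^2 := by
        intro j
        rw [hsum j, hedef, hδdef]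
        ring
      show (1/2) * ∑ j, ((∑ i, ∑ k, ((1 - s) * v0 i k + s * vs i k) * Z i k j)
          - Y 0 j)^2 = a * s^2 + b * s + c
      rw [Finset.sum_congr rfl fun j _ => h2 j]
      rw [Finset.sum_add_distrib, Finset.sum_add_distrib, ← Finset.sum_mul,
        ← Finset.sum_mul, ← Finset.mul_sum]
      rw [hadef, hbdef, hcdef]
      ring
    have hfvs : f vs = a * 1^2 + b * 1 + c := by
      rw [← key 1]
      congr 1
      funext i k
      ring
    have ha : 0 ≤ a := by rw [hadef]; positivity
    have hb : b = -(2 * a) := by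
      refine quad_coeff' ha fun s => ?_
      have h1 := hmin (fun i k => (1 - s) * v0 i k + s * vs i k)
      rw [key s, hfvs] at h1
      linarith
    set τ : ℝ → ℝ := fun t => max 0 (2*t - 1) with hτdef
    set σ : ℝ → ℝ := fun t => max 0 (1 - 2*t) with hσdef
    have hτ0 : ∀ t, 0 ≤ τ t := fun t => le_max_left _ _
    set γ : ℝ → (Fin p → ℝ) × ((i : Fin p) → Fin (d i) → ℝ) := fun t =>
      (fun i => if θ0.1 i = 0 then Real.sqrt (τ t) else θ0.1 i,
       fun i k => if θ0.1 i = 0 then σ t * θ0.2 i k + Real.sqrt (τ t) * vs i k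
                  else (1 - τ t) * θ0.2 i k + (τ t / θ0.1 i) * vs i k) with hγdef
    have hcross : ∀ t, Real.sqrt (τ t) * σ t = 0 := by
      intro t
      rcases le_total t (1/2) with h | h
      · have hτt : τ t = 0 := by rw [hτdef]; exact max_eq_left (by linarith)
        rw [hτt, Real.sqrt_zero, zero_mul]
      · have hσt : σ t = 0 := by rw [hσdef]; exact max_eq_left (by linarith)
        rw [hσt, mul_zero]
    have hprod : ∀ t, (fun i k => (γ t).1 i * (γ t).2 i k)
        = (fun i k => (1 - τ t) * v0 i k + τ t * vs i k) := by
      intro t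
      funext i k
      rw [hγdef, hv0def]
      simp only
      by_cases h : θ0.1 i = 0
      · rw [if_pos h, if_pos h, h]
        have hss : Real.sqrt (τ t) * Real.sqrt (τ t) = τ t := Real.mul_self_sqrt (hτ0 t)
        have : Real.sqrt (τ t) * (σ t * θ0.2 i k + Real.sqrt (τ t) * vs i k)
            = (Real.sqrt (τ t) * σ t) * θ0.2 i k
              + (Real.sqrt (τ t) * Real.sqrt (τ t)) * vs i k := by ring
        rw [this, hcross t, hss]
        ring
      · rw [if_neg h, if_neg h]
        field_simp
    have hLγ : ∀ t, L (γ t) = a * (τ t)^2 + b * (τ t) + c := by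
      intro t
      rw [hLf, hprod t, key]
    have hτc : Continuous τ := by
      rw [hτdef]; exact continuous_const.max ((continuous_const.mul continuous_id).sub continuous_const)
    have hσc : Continuous σ := by
      rw [hσdef]; exact continuous_const.max (continuous_const.sub (continuous_const.mul continuous_id))
    have hγc : Continuous γ := by
      rw [hγdef]
      apply Continuous.prodMk
      · apply continuous_pi
        intro i
        by_cases h : θ0.1 i = 0
        · simp only [if_pos h]
          exact Real.continuous_sqrt.comp hτc
        · simp only [if_neg h]
          exact continuous_const
      · apply continuous_pi
        intro i
        apply continuous_pi
        intro k
        by_cases h : θ0.1 i = 0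
        · simp only [if_pos h]
          exact (hσc.mul continuous_const).add
            ((Real.continuous_sqrt.comp hτc).mul continuous_const)
        · simp only [if_neg h]
          exact ((continuous_const.sub hτc).mul continuous_const).add
            ((hτc.div_const _).mul continuous_const)
    refine ⟨γ, ?_, hγc.continuousOn, ?_, ?_⟩
    · -- γ 0 = θ0
      have hτ00 : τ 0 = 0 := by rw [hτdef]; norm_num
      have hσ00 : σ 0 = 1 := by rw [hσdef]; norm_num
      rw [hγdef]
      refine Prod.ext ?_ ?_
      · funext i
        simp only [hτ00, Real.sqrt_zero]
        by_cases h : θ0.1 i = 0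
        · rw [if_pos h, h]
        · rw [if_neg h]
      · funext i k
        simp only [hτ00, hσ00, Real.sqrt_zero]
        by_cases h : θ0.1 i = 0
        · rw [if_pos h]; ring
        · rw [if_neg h]; ring
    · -- antitone
      intro s hs t ht hst
      simp only [hLγ]
      have h1 : 0 ≤ τ s := hτ0 s
      have h2 : τ s ≤ τ t := max_le_max le_rfl (by linarith)
      have h3 : τ t ≤ 1 := max_le (by norm_num) (by linarith [ht.2])
      rw [hb]
      exact quad_antitone' ha h1 h2 h3
    · -- tendsto
      have hτ1 : τ 1 = 1 := by rw [hτdef]; norm_num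
      have hcont : Continuous (fun t => a * (τ t)^2 + b * (τ t) + c) :=
        ((continuous_const.mul (hτc.pow 2)).add (continuous_const.mul hτc)).add
          continuous_const
      have h1 : Filter.Tendsto (fun t => a * (τ t)^2 + b * (τ t) + c)
          (nhdsWithin 1 (Set.Ico (0:ℝ) 1)) (nhds (a * (τ 1)^2 + b * (τ 1) + c)) :=
        (hcont.tendsto 1).mono_left nhdsWithin_le_nhds
      have heq : (fun t => L (γ t)) = fun t => a * (τ t)^2 + b * (τ t) + c :=
        funext hLγ
      have hval : a * (τ 1)^2 + b * (τ 1) + c = ⨅ θ, L θ := by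
        rw [hτ1, hinf, hfvs]
      rw [heq, ← hval]
      exact h1
  refine ⟨part1, ?_⟩
  rintro θ0 ⟨ε, hε, hsl⟩
  by_contra hne
  obtain ⟨γ, hγ0, hγc, hγa, hγt⟩ := part1 θ0
  have hIle : (⨅ θ, L θ) ≤ L θ0 := ciInf_le hbdd θ0
  have hlt : (⨅ θ, L θ) < L θ0 := lt_of_le_of_ne hIle fun h => hne h.symm
  have hne1 : (nhdsWithin (1:ℝ) (Set.Ico (0:ℝ) 1)).NeBot := by
    refine mem_closure_iff_nhdsWithin_neBot.mp ?_
    rw [closure_Ico (by norm_num : (0:ℝ) ≠ 1)]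
    exact ⟨by norm_num, le_rfl⟩
  have hev : ∀ᶠ t in nhdsWithin (1:ℝ) (Set.Ico (0:ℝ) 1), L (γ t) < L θ0 :=
    hγt.eventually (Filter.Tendsto.eventually_lt_const hlt Filter.tendsto_id)
  have hev2 : ∀ᶠ t in nhdsWithin (1:ℝ) (Set.Ico (0:ℝ) 1), t ∈ Set.Ico (0:ℝ) 1 :=
    eventually_mem_nhdsWithin
  obtain ⟨t2, ht2mem, ht2lt⟩ := (hev2.and hev).exists
  set A := {t | t ∈ Set.Ico (0:ℝ) 1 ∧ ε < ‖γ t - θ0‖} with hA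
  have ht2A : t2 ∈ A := by
    refine ⟨ht2mem, ?_⟩
    by_contra hle
    push_neg at hle
    have hneq : γ t2 ≠ θ0 := by
      intro h
      rw [h] at ht2lt
      exact lt_irrefl _ ht2lt
    exact absurd (hsl _ hneq hle) (not_lt.mpr ht2lt.le)
  have hAb : BddBelow A := ⟨0, fun x hx => hx.1.1⟩
  have hAne : A.Nonempty := ⟨t2, ht2A⟩
  set t1 := sInf A with ht1
  have ht1mem : t1 ∈ Set.Ico (0:ℝ) 1 :=
    ⟨le_csInf hAne fun x hx => hx.1.1, lt_of_le_of_lt (csInf_le hAb ht2A) ht2mem.2⟩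
  have ht1cl : t1 ∈ closure A := csInf_mem_closure hAne hAb
  have hh : ContinuousOn (fun t => ‖γ t - θ0‖) (Set.Ico (0:ℝ) 1) :=
    (hγc.sub continuousOn_const).norm
  have hge : ε ≤ ‖γ t1 - θ0‖ := by
    have hcw : ContinuousWithinAt (fun t => ‖γ t - θ0‖) A t1 :=
      (hh t1 ht1mem).mono fun x hx => hx.1
    have hnb : (nhdsWithin t1 A).NeBot := mem_closure_iff_nhdsWithin_neBot.mp ht1cl
    exact ge_of_tendsto hcw (eventually_mem_nhdsWithin.mono fun x hx => hx.2.le)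
  have ht1pos : 0 < t1 := by
    rcases eq_or_lt_of_le ht1mem.1 with h | h
    · exfalso
      rw [← h, hγ0, sub_self, norm_zero] at hge
      linarith
    · exact h
  have hle : ‖γ t1 - θ0‖ ≤ ε := by
    have hsub : Set.Ico (0:ℝ) t1 ⊆ Set.Ico (0:ℝ) 1 := Set.Ico_subset_Ico le_rfl ht1mem.2.le
    have hcw : ContinuousWithinAt (fun t => ‖γ t - θ0‖) (Set.Ico 0 t1) t1 :=
      (hh t1 ht1mem).mono hsub
    have hclm : t1 ∈ closure (Set.Ico (0:ℝ) t1) := by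
      rw [closure_Ico (ne_of_lt ht1pos)]
      exact ⟨ht1pos.le, le_rfl⟩
    have hnb : (nhdsWithin t1 (Set.Ico (0:ℝ) t1)).NeBot :=
      mem_closure_iff_nhdsWithin_neBot.mp hclm
    refine le_of_tendsto hcw (eventually_mem_nhdsWithin.mono fun x hx => ?_)
    by_contra hgt
    push_neg at hgt
    have hxA : x ∈ A := ⟨⟨hx.1, lt_trans hx.2 ht1mem.2⟩, hgt⟩
    exact absurd (csInf_le hAb hxA) (not_le.mpr hx.2)
  have hneq : γ t1 ≠ θ0 := by
    intro h
    rw [h, sub_self, norm_zero] at hge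
    linarith
  have hstrict := hsl _ hneq hle
  have h0mem : (0:ℝ) ∈ Set.Ico (0:ℝ) 1 := ⟨le_rfl, one_pos⟩
  have hmono := hγa h0mem ht1mem ht1mem.1
  simp only [hγ0] at hmono
  linarith
end

section
/- Consider a deep linear network with a sparse first layer: L(V_L,…,V_1, W_1,…,W_s) = (1/2)‖V_L ⋯ V_1 · blkdiag(W_1,…,W_s) · Z − Y‖_F², where blkdiag(W_1,…,W_s) is the block-diagonal matrix with blocks W_i ∈ ℝ^{p_i×d_i} and Z stacks Z_1,…,Z_s vertically. If p_i ≥ d_i for all i ∈ {1,…,s}, then L has no spurious strict minima: every point θ_0 for which there is ε > 0 with L(θ_0) < L(θ) for all θ ≠ θ_0 with ‖θ − θ_0‖ ≤ ε satisfies L(θ_0) = inf L. -/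
open scoped BigOperators Matrix

/-- Product `V_L ⋯ V_1` of the dense layers, as a matrix `Fin (q L) × Fin (q 0)`. -/
noncomputable def layerProd (q : ℕ → ℕ) :
    (L : ℕ) → ((j : Fin L) → Fin (q (j + 1)) → Fin (q j) → ℝ) →
      Matrix (Fin (q L)) (Fin (q 0)) ℝ
  | 0, _ => 1
  | (L + 1), V =>
      (Matrix.of (V (Fin.last L)) : Matrix (Fin (q (L + 1))) (Fin (q L)) ℝ) *
        layerProd q L (fun j => V ⟨j.1, Nat.lt_succ_of_lt j.2⟩)

lemma frobSq_nonneg {m n : Type*} [Fintype m] [Fintype n] (M : Matrix m n ℝ) : 0 ≤ frobSq M :=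
  Finset.sum_nonneg fun _ _ => Finset.sum_nonneg fun _ _ => sq_nonneg _

lemma frobSq_add_smul {m n : Type*} [Fintype m] [Fintype n] (R D : Matrix m n ℝ) (t : ℝ) :
    frobSq (R + t • D) = frobSq R + t * (2 * ∑ i, ∑ j, R i j * D i j) + t ^ 2 * frobSq D := by
  simp only [frobSq, Matrix.add_apply, Matrix.smul_apply, smul_eq_mul, Finset.mul_sum,
    ← Finset.sum_add_distrib]
  exact Finset.sum_congr rfl fun i _ => Finset.sum_congr rfl fun j _ => by ring

noncomputable def bmat {s : ℕ} {p : Fin s → ℕ} (d : Fin s → ℕ) {q0 : ℕ}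
    (e : ((i : Fin s) × Fin (p i)) ≃ Fin q0)
    (w : (i : Fin s) → Fin (p i) → Fin (d i) → ℝ) :
    Matrix (Fin q0) ((i : Fin s) × Fin (d i)) ℝ :=
  Matrix.of fun a b => Matrix.blockDiagonal' (fun i => Matrix.of (w i)) (e.symm a) b

lemma bmat_add {s : ℕ} {p : Fin s → ℕ} (d : Fin s → ℕ) {q0 : ℕ}
    (e : ((i : Fin s) × Fin (p i)) ≃ Fin q0) (w w' : (i : Fin s) → Fin (p i) → Fin (d i) → ℝ) :
    bmat d e (w + w') = bmat d e w + bmat d e w' := by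
  ext a b
  show Matrix.blockDiagonal' ((fun i => Matrix.of (w i)) + (fun i => Matrix.of (w' i))) _ _ = _
  rw [Matrix.blockDiagonal'_add]
  rfl

lemma bmat_smul {s : ℕ} {p : Fin s → ℕ} (d : Fin s → ℕ) {q0 : ℕ}
    (e : ((i : Fin s) × Fin (p i)) ≃ Fin q0) (c : ℝ) (w : (i : Fin s) → Fin (p i) → Fin (d i) → ℝ) :
    bmat d e (c • w) = c • bmat d e w := by
  ext a b
  show Matrix.blockDiagonal' (c • fun i => Matrix.of (w i)) _ _ = _
  rw [Matrix.blockDiagonal'_smul]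
  rfl

lemma bmat_zero {s : ℕ} {p : Fin s → ℕ} (d : Fin s → ℕ) {q0 : ℕ}
    (e : ((i : Fin s) × Fin (p i)) ≃ Fin q0) :
    bmat d e (0 : (i : Fin s) → Fin (p i) → Fin (d i) → ℝ) = 0 := by
  ext a b
  show Matrix.blockDiagonal' (0 : ∀ i, Matrix (Fin (p i)) (Fin (d i)) ℝ) _ _ = _
  rw [Matrix.blockDiagonal'_zero]
  rfl


set_option maxHeartbeats 1000000
set_option synthInstance.maxHeartbeats 400000

/-- A deep linear network with a sparse first layer
`L(V_L,…,V_1,W_1,…,W_s) = (1/2)‖V_L ⋯ V_1 · blkdiag(W_1,…,W_s) · Z − Y‖_F²` has no spurious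
strict minima when `pᵢ ≥ dᵢ` for all `i`: every strict local minimizer attains `inf L`.
(Here `e` identifies the block index set `Σ i, Fin (p i)` with `Fin (q 0)`.) -/
theorem deep_sd_linear_no_spurious_strict_minima
    (s n Ldepth : ℕ) (p d : Fin s → ℕ) (q : ℕ → ℕ)
    (e : ((i : Fin s) × Fin (p i)) ≃ Fin (q 0))
    (Z : (i : Fin s) → Matrix (Fin (d i)) (Fin n) ℝ)
    (Y : Matrix (Fin (q Ldepth)) (Fin n) ℝ)
    (hpd : ∀ i, d i ≤ p i)
    (L : (((j : Fin Ldepth) → Fin (q (j + 1)) → Fin (q j) → ℝ) ×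
          ((i : Fin s) → Fin (p i) → Fin (d i) → ℝ)) → ℝ)
    (hL : ∀ θ, L θ = (1 / 2) * frobSq
      (layerProd q Ldepth θ.1 *
        Matrix.of (fun (a : Fin (q 0)) (b : (i : Fin s) × Fin (d i)) =>
          Matrix.blockDiagonal' (fun i => Matrix.of (θ.2 i)) (e.symm a) b) *
        Matrix.of (fun (b : (i : Fin s) × Fin (d i)) (j : Fin n) => Z b.1 b.2 j) - Y)) :
    ∀ θ0, (∃ ε > (0 : ℝ), ∀ θ, θ ≠ θ0 → ‖θ - θ0‖ ≤ ε → L θ0 < L θ) →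
      L θ0 = ⨅ θ, L θ := by
  intro θ0 hmin
  have hq : ∀ θ', L θ' = (1 / 2) * frobSq
      (layerProd q Ldepth θ'.1 * bmat d e θ'.2 *
        Matrix.of (fun (b : (i : Fin s) × Fin (d i)) (j : Fin n) => Z b.1 b.2 j) - Y) := hL
  clear hL
  suffices h : ∀ θ, L θ0 ≤ L θ by
    refine le_antisymm (le_ciInf h) (ciInf_le ⟨L θ0, ?_⟩ θ0)
    rintro x ⟨θ, rfl⟩
    exact h θ
  obtain ⟨ε, hε, hstrict⟩ := hmin
  intro θ
  cases Ldepth with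
  | zero =>
    by_cases hθ : θ = θ0
    · exact le_of_eq (by rw [hθ])
    set Zm : Matrix ((i : Fin s) × Fin (d i)) (Fin n) ℝ :=
      Matrix.of (fun b j => Z b.1 b.2 j) with hZm
    set u := θ.2 - θ0.2 with hu
    set R : Matrix (Fin (q 0)) (Fin n) ℝ := bmat d e θ0.2 * Zm - Y with hR
    set D : Matrix (Fin (q 0)) (Fin n) ℝ := bmat d e u * Zm with hD
    have hone : ∀ V, layerProd q 0 V = (1 : Matrix (Fin (q 0)) (Fin (q 0)) ℝ) := fun _ => rfl
    have hline : ∀ t : ℝ, L (θ0 + t • (θ - θ0)) =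
        L θ0 + t * (∑ i, ∑ j, R i j * D i j) + t ^ 2 * ((1 / 2) * frobSq D) := by
      intro t
      have h2 : (θ0 + t • (θ - θ0)).2 = θ0.2 + t • u := by
        simp [hu, Prod.snd_add, Prod.smul_snd, Prod.snd_sub]
      rw [hq, hq θ0, h2, bmat_add, bmat_smul, hone, hone, Matrix.one_mul, Matrix.one_mul,
        Matrix.add_mul, Matrix.smul_mul, add_sub_right_comm, ← hR, ← hD, frobSq_add_smul]
      ring
    have hne : θ - θ0 ≠ 0 := sub_ne_zero.mpr hθ
    have hn : 0 < ‖θ - θ0‖ := norm_pos_iff.mpr hne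
    set t0 := min 1 (ε / ‖θ - θ0‖) with ht0def
    have ht0 : 0 < t0 := lt_min one_pos (div_pos hε hn)
    have ht01 : t0 ≤ 1 := min_le_left _ _
    have hnorm : ‖(θ0 + t0 • (θ - θ0)) - θ0‖ ≤ ε := by
      rw [add_sub_cancel_left, norm_smul, Real.norm_eq_abs, abs_of_pos ht0]
      calc t0 * ‖θ - θ0‖ ≤ (ε / ‖θ - θ0‖) * ‖θ - θ0‖ := by
            exact mul_le_mul_of_nonneg_right (min_le_right _ _) hn.le
        _ = ε := div_mul_cancel₀ _ hn.ne'
    have hnoteq : θ0 + t0 • (θ - θ0) ≠ θ0 := by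
      intro hcon
      have : t0 • (θ - θ0) = 0 := by
        have := congrArg (fun x => x - θ0) hcon
        simpa [add_sub_cancel_left] using this
      rcases smul_eq_zero.mp this with h | h
      · exact ht0.ne' h
      · exact hne h
    have hlt := hstrict _ hnoteq hnorm
    rw [hline t0] at hlt
    have hLθ : L θ = L θ0 + (∑ i, ∑ j, R i j * D i j) + (1 / 2) * frobSq D := by
      have h1 := hline 1
      have hτ : θ0 + (1 : ℝ) • (θ - θ0) = θ := by rw [one_smul]; abel
      rw [hτ] at h1
      rw [h1]; ring
    have hAnn : 0 ≤ (1 / 2) * frobSq D := by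
      have := frobSq_nonneg D
      linarith
    rw [hLθ]
    nlinarith [mul_nonneg (mul_nonneg ht0.le hAnn) (sub_nonneg.mpr ht01)]
  | succ m =>
    have hsplit : ∀ V : (j : Fin (m + 1)) → Fin (q (j + 1)) → Fin (q j) → ℝ,
        layerProd q (m + 1) V =
          (Matrix.of (V (Fin.last m)) : Matrix (Fin (q (m + 1))) (Fin (q m)) ℝ) *
            layerProd q m (fun j => V ⟨j.1, Nat.lt_succ_of_lt j.2⟩) := fun _ => rfl
    rcases Classical.em (θ0.1 (Fin.last m) = 0 ∧ θ0.2 = 0) with hdeg | hdeg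
    · obtain ⟨hV0, hW0⟩ := hdeg
      have hBW : bmat d e θ0.2 = 0 := by rw [hW0, bmat_zero]
      have hP0 : layerProd q (m + 1) θ0.1 = 0 := by
        rw [hsplit, hV0]
        simp [Matrix.zero_mul]
      have hval : ∀ θ', θ'.1 = θ0.1 ∨ θ'.2 = θ0.2 → L θ' = L θ0 := by
        intro θ' hc
        rw [hq, hq]
        rcases hc with hc | hc
        · rw [hc, hP0]; simp [Matrix.zero_mul, hBW, Matrix.mul_zero]
        · rw [hc, hBW]; simp [Matrix.mul_zero, Matrix.zero_mul, hP0]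
      rcases Classical.em (∀ v : (j : Fin (m + 1)) → Fin (q (j + 1)) → Fin (q j) → ℝ, v = 0) with hA | hA
      · rcases Classical.em (∀ w : (i : Fin s) → Fin (p i) → Fin (d i) → ℝ, w = 0) with hB | hB
        · have hθ : θ = θ0 :=
            Prod.ext (sub_eq_zero.mp (hA (θ.1 - θ0.1))) (sub_eq_zero.mp (hB (θ.2 - θ0.2)))
          rw [hθ]
        · push_neg at hB
          obtain ⟨w, hw⟩ := hB
          have hwn : 0 < ‖w‖ := norm_pos_iff.mpr hw
          set θ' := θ0 + (ε / ‖w‖) • ((0, w) : ((j : Fin (m + 1)) → Fin (q (j + 1)) → Fin (q j) → ℝ) ×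
            ((i : Fin s) → Fin (p i) → Fin (d i) → ℝ)) with hθ'
          have hne0 : ((0, w) : ((j : Fin (m + 1)) → Fin (q (j + 1)) → Fin (q j) → ℝ) ×
              ((i : Fin s) → Fin (p i) → Fin (d i) → ℝ)) ≠ 0 := by
            simp [Prod.ext_iff, hw]
          have hne : θ' ≠ θ0 := by
            intro hcon
            have : (ε / ‖w‖) • ((0, w) : ((j : Fin (m + 1)) → Fin (q (j + 1)) → Fin (q j) → ℝ) ×
                ((i : Fin s) → Fin (p i) → Fin (d i) → ℝ)) = 0 := by
              have h5 := congrArg (fun x => x - θ0) hcon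
              simpa [hθ', add_sub_cancel_left] using h5
            exact hne0 ((smul_eq_zero.mp this).resolve_left (div_pos hε hwn).ne')
          have hnorm : ‖θ' - θ0‖ ≤ ε := by
            rw [hθ', add_sub_cancel_left, norm_smul, Real.norm_eq_abs,
              abs_of_pos (div_pos hε hwn), Prod.norm_def]
            simp only [norm_zero]
            rw [max_eq_right (norm_nonneg w), div_mul_cancel₀ _ hwn.ne']
          have h1 : θ'.1 = θ0.1 := by simp [hθ']
          exact absurd (hval θ' (Or.inl h1)) (hstrict θ' hne hnorm).ne'
      · push_neg at hA
        obtain ⟨v, hv⟩ := hA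
        have hvn : 0 < ‖v‖ := norm_pos_iff.mpr hv
        set θ' := θ0 + (ε / ‖v‖) • ((v, 0) : ((j : Fin (m + 1)) → Fin (q (j + 1)) → Fin (q j) → ℝ) ×
          ((i : Fin s) → Fin (p i) → Fin (d i) → ℝ)) with hθ'
        have hne0 : ((v, 0) : ((j : Fin (m + 1)) → Fin (q (j + 1)) → Fin (q j) → ℝ) ×
            ((i : Fin s) → Fin (p i) → Fin (d i) → ℝ)) ≠ 0 := by
          simp [Prod.ext_iff, hv]
        have hne : θ' ≠ θ0 := by
          intro hcon
          have : (ε / ‖v‖) • ((v, 0) : ((j : Fin (m + 1)) → Fin (q (j + 1)) → Fin (q j) → ℝ) ×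
              ((i : Fin s) → Fin (p i) → Fin (d i) → ℝ)) = 0 := by
            have h5 := congrArg (fun x => x - θ0) hcon
            simpa [hθ', add_sub_cancel_left] using h5
          exact hne0 ((smul_eq_zero.mp this).resolve_left (div_pos hε hvn).ne')
        have hnorm : ‖θ' - θ0‖ ≤ ε := by
          rw [hθ', add_sub_cancel_left, norm_smul, Real.norm_eq_abs,
            abs_of_pos (div_pos hε hvn), Prod.norm_def]
          simp only [norm_zero]
          rw [max_eq_left (norm_nonneg v), div_mul_cancel₀ _ hvn.ne']
        have h2 : θ'.2 = θ0.2 := by simp [hθ']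
        exact absurd (hval θ' (Or.inr h2)) (hstrict θ' hne hnorm).ne'
    · -- non-degenerate case: use the scaling symmetry
      set Vl := θ0.1 (Fin.last m) with hVl
      have hcont : ContinuousAt (fun c : ℝ =>
          ((Function.update θ0.1 (Fin.last m) (c • Vl), c⁻¹ • θ0.2) :
            ((j : Fin (m + 1)) → Fin (q (j + 1)) → Fin (q j) → ℝ) ×
            ((i : Fin s) → Fin (p i) → Fin (d i) → ℝ))) 1 := by
        apply ContinuousAt.prodMk
        · apply continuousAt_pi.mpr
          intro j
          by_cases hj : j = Fin.last m
          · subst hj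
            simp only [Function.update_self]
            exact (continuous_id.smul continuous_const).continuousAt
          · simp only [Function.update_of_ne hj]
            exact continuousAt_const
        · exact (continuousAt_inv₀ one_ne_zero).smul continuousAt_const
      obtain ⟨δ, hδ, hball⟩ := Metric.continuousAt_iff.mp hcont ε hε
      set c := 1 + min (δ / 2) 1 with hc
      have hmpos : 0 < min (δ / 2) 1 := lt_min (half_pos hδ) one_pos
      have hc1 : 1 < c := by simp [hc, hmpos]
      have hc0 : c ≠ 0 := by linarith
      have hcne1 : c ≠ 1 := by linarith
      have hdist : dist c 1 < δ := by
        rw [Real.dist_eq, hc, add_sub_cancel_left, abs_of_pos hmpos]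
        calc min (δ / 2) 1 ≤ δ / 2 := min_le_left _ _
          _ < δ := half_lt_self hδ
      have hg1 : ((Function.update θ0.1 (Fin.last m) ((1 : ℝ) • Vl), (1 : ℝ)⁻¹ • θ0.2) :
          ((j : Fin (m + 1)) → Fin (q (j + 1)) → Fin (q j) → ℝ) ×
          ((i : Fin s) → Fin (p i) → Fin (d i) → ℝ)) = θ0 := by
        rw [one_smul, inv_one, one_smul, hVl, Function.update_eq_self]
      set θc := ((Function.update θ0.1 (Fin.last m) (c • Vl), c⁻¹ • θ0.2) :
          ((j : Fin (m + 1)) → Fin (q (j + 1)) → Fin (q j) → ℝ) ×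
          ((i : Fin s) → Fin (p i) → Fin (d i) → ℝ)) with hθc
      have hnear : ‖θc - θ0‖ ≤ ε := by
        have := hball hdist
        rw [hg1] at this
        rw [← dist_eq_norm]
        exact this.le
      have hne : θc ≠ θ0 := by
        intro hcon
        apply hdeg
        constructor
        · have h1 := congrFun (congrArg Prod.fst hcon) (Fin.last m)
          simp only [hθc, Function.update_self] at h1
          have : (c - 1) • Vl = 0 := by
            rw [sub_smul, one_smul, h1, hVl, sub_self]
          rcases smul_eq_zero.mp this with h | h
          · exact absurd (sub_eq_zero.mp h) hcne1
          · exact h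
        · have h2 := congrArg Prod.snd hcon
          simp only [hθc] at h2
          have : (c⁻¹ - 1) • θ0.2 = 0 := by rw [sub_smul, one_smul, h2, sub_self]
          rcases smul_eq_zero.mp this with h | h
          · exfalso
            apply hcne1
            have : c⁻¹ = 1 := by linarith [sub_eq_zero.mp h]
            rw [← inv_inv c, this, inv_one]
          · exact h
      have hLeq : L θc = L θ0 := by
        rw [hq, hq]
        congr 2
        have hP : layerProd q (m + 1) θc.1 = c • layerProd q (m + 1) θ0.1 := by
          rw [hsplit, hsplit]
          have e2 : (fun j : Fin m => θc.1 ⟨j.1, Nat.lt_succ_of_lt j.2⟩) =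
              fun j : Fin m => θ0.1 ⟨j.1, Nat.lt_succ_of_lt j.2⟩ := by
            funext j
            exact Function.update_of_ne (by simp [Fin.ext_iff, Fin.last, j.2.ne]) _ _
          have e1 : θc.1 (Fin.last m) = c • Vl := Function.update_self _ _ _
          have e3 : (Matrix.of (c • Vl) : Matrix (Fin (q (m + 1))) (Fin (q m)) ℝ) =
              c • Matrix.of Vl := rfl
          rw [e1, e2, e3, Matrix.smul_mul, ← hVl]
        have hB : bmat d e θc.2 = c⁻¹ • bmat d e θ0.2 := bmat_smul d e c⁻¹ θ0.2
        rw [hP, hB, Matrix.smul_mul, Matrix.mul_smul, smul_smul, mul_inv_cancel₀ hc0,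
          one_smul]
      exact absurd hLeq (hstrict θc hne hnear).ne'
end

section
/- For the one-hidden-layer linear CNN in FULL mode, the loss L(U, w_1,…,w_{p_1}) = (1/2)‖U F(W) X − Y‖_F², where F(W) vertically stacks f_F(w_1),…,f_F(w_{p_1}), has no spurious valleys for every number of channels p_1 ≥ 1: there is no path-connected component T of a sublevel set {θ : L(θ) ≤ α} with inf_{θ∈T} L(θ) > inf L. -/
open scoped BigOperators Matrix

/-- FULL-mode 1-D convolution matrix (stride 1) of a kernel `w ∈ ℝ^{d₁}`:
`(f_F(w))_{ij} = w_{d₁+j−i}` (1-indexed) when that index is in range, else `0`. -/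
noncomputable def convFull (d : ℕ) {d₁ : ℕ} (w : Fin d₁ → ℝ) :
    Matrix (Fin (d + d₁ - 1)) (Fin d) ℝ :=
  Matrix.of fun i j =>
    if h : (j : ℕ) ≤ i ∧ (i : ℕ) < j + d₁ then w ⟨d₁ - 1 + j - i, by omega⟩ else 0

/- ### Auxiliary lemmas -/

lemma half_frobSq_combo {dy n : ℕ} (Y A B : Matrix (Fin dy) (Fin n) ℝ) (t : ℝ)
    (h0 : 0 ≤ t) (h1 : t ≤ 1) :
    (1/2) * frobSq ((1 - t) • A + t • B - Y) ≤
      max ((1/2) * frobSq (A - Y)) ((1/2) * frobSq (B - Y)) := by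
  have key : frobSq ((1 - t) • A + t • B - Y) ≤ (1 - t) * frobSq (A - Y) + t * frobSq (B - Y) := by
    unfold frobSq
    rw [Finset.mul_sum, Finset.mul_sum, ← Finset.sum_add_distrib]
    refine Finset.sum_le_sum fun i _ => ?_
    rw [Finset.mul_sum, Finset.mul_sum, ← Finset.sum_add_distrib]
    refine Finset.sum_le_sum fun j _ => ?_
    have h : ((1 - t) • A + t • B - Y) i j = (1-t) * A i j + t * B i j - Y i j := by
      simp [Matrix.sub_apply, Matrix.add_apply, Matrix.smul_apply]
    rw [h]
    have e1 : (A - Y) i j = A i j - Y i j := rfl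
    have e2 : (B - Y) i j = B i j - Y i j := rfl
    rw [e1, e2]
    nlinarith [sq_nonneg (A i j - B i j), mul_nonneg h0 (sub_nonneg.2 h1)]
  have hab : (1-t) * frobSq (A - Y) + t * frobSq (B - Y)
      ≤ max (frobSq (A - Y)) (frobSq (B - Y)) := by
    have ha := le_max_left (frobSq (A - Y)) (frobSq (B - Y))
    have hb := le_max_right (frobSq (A - Y)) (frobSq (B - Y))
    nlinarith [mul_le_mul_of_nonneg_left ha (sub_nonneg.2 h1), mul_le_mul_of_nonneg_left hb h0]
  have hh := key.trans hab
  rcases le_total (frobSq (A - Y)) (frobSq (B - Y)) with h | h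
  · rw [max_eq_right (by linarith : (1/2) * frobSq (A - Y) ≤ (1/2) * frobSq (B - Y))]
    rw [max_eq_right h] at hh; linarith
  · rw [max_eq_left (by linarith : (1/2) * frobSq (B - Y) ≤ (1/2) * frobSq (A - Y))]
    rw [max_eq_left h] at hh; linarith

lemma exists_lsq {d dy n : ℕ} (X : Matrix (Fin d) (Fin n) ℝ) (Y : Matrix (Fin dy) (Fin n) ℝ) :
    ∃ Mh : Matrix (Fin dy) (Fin d) ℝ, ∀ M : Matrix (Fin dy) (Fin d) ℝ,
      frobSq (Mh * X - Y) ≤ frobSq (M * X - Y) := by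
  classical
  set E := EuclideanSpace ℝ (Fin dy × Fin n) with hE
  let φ : Matrix (Fin dy) (Fin d) ℝ →ₗ[ℝ] E :=
    { toFun := fun M => WithLp.toLp 2 (fun p => (M * X) p.1 p.2 : Fin dy × Fin n → ℝ)
      map_add' := by intro a b; ext p; simp [Matrix.add_mul]; rfl
      map_smul' := by intro c a; ext p; simp [Matrix.smul_mul]; rfl }
  let u : E := WithLp.toLp 2 (fun p => Y p.1 p.2 : Fin dy × Fin n → ℝ)
  let K : Submodule ℝ E := LinearMap.range φ
  have hKc : IsComplete (K : Set E) := K.complete_of_finiteDimensional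
  obtain ⟨v, hvK, hv⟩ :=
    exists_norm_eq_iInf_of_complete_convex ⟨0, K.zero_mem⟩ hKc K.convex u
  have hmin : ∀ w ∈ K, ‖u - v‖ ≤ ‖u - w‖ := by
    intro w hw
    rw [hv]
    exact ciInf_le ⟨0, by rintro _ ⟨w', rfl⟩; exact norm_nonneg _⟩ (⟨w, hw⟩ : K)
  obtain ⟨Mh, rfl⟩ := hvK
  refine ⟨Mh, fun M => ?_⟩
  have norm_sq : ∀ N : Matrix (Fin dy) (Fin d) ℝ, frobSq (N * X - Y) = ‖u - φ N‖ ^ 2 := by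
    intro N
    rw [EuclideanSpace.norm_eq, Real.sq_sqrt (by positivity)]
    unfold frobSq
    rw [Fintype.sum_prod_type]
    refine Finset.sum_congr rfl fun i _ => Finset.sum_congr rfl fun j _ => ?_
    have : (u - φ N) (i, j) = Y i j - (N * X) i j := rfl
    rw [this, Real.norm_eq_abs, sq_abs, Matrix.sub_apply]
    ring
  rw [norm_sq, norm_sq]
  exact pow_le_pow_left₀ (norm_nonneg _) (hmin (φ M) ⟨M, rfl⟩) 2

lemma exists_left_solve {d d₁ dy : ℕ} (hd : 1 ≤ d) (hd₁ : 1 ≤ d₁)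
    (w : Fin d₁ → ℝ) (hw : w ≠ 0) (M : Matrix (Fin dy) (Fin d) ℝ) :
    ∃ V : Matrix (Fin dy) (Fin (d + d₁ - 1)) ℝ, V * convFull d w = M := by
  classical
  have hne : (Finset.univ.filter fun k : Fin d₁ => w k ≠ 0).Nonempty := by
    by_contra h
    apply hw; funext k
    by_contra hk
    exact h ⟨k, Finset.mem_filter.2 ⟨Finset.mem_univ _, hk⟩⟩
  set s : Fin d₁ := (Finset.univ.filter fun k : Fin d₁ => w k ≠ 0).max' hne with hs
  have hws : w s ≠ 0 :=
    (Finset.mem_filter.1 ((Finset.univ.filter fun k : Fin d₁ => w k ≠ 0).max'_mem hne)).2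
  have hmax : ∀ k : Fin d₁, (s : ℕ) < (k : ℕ) → w k = 0 := by
    intro k hk
    by_contra h
    have hk' : k ∈ Finset.univ.filter fun k : Fin d₁ => w k ≠ 0 :=
      Finset.mem_filter.2 ⟨Finset.mem_univ _, h⟩
    have := Finset.le_max' _ k hk'
    exact absurd hk (not_lt.2 this)
  have hslt : (s : ℕ) < d₁ := s.isLt
  let emb : Fin d → Fin (d + d₁ - 1) := fun j => ⟨d₁ - 1 - s + j, by omega⟩
  let G : Matrix (Fin d) (Fin d) ℝ := fun j j' => convFull d w (emb j) j'
  have hGdiag : ∀ j, G j j = w s := by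
    intro j
    show convFull d w (emb j) j = w s
    unfold convFull
    rw [Matrix.of_apply]
    have hc : (j : ℕ) ≤ ((emb j : Fin (d + d₁ - 1)) : ℕ) ∧
        ((emb j : Fin (d + d₁ - 1)) : ℕ) < (j : ℕ) + d₁ := by
      simp only [emb]; omega
    rw [dif_pos hc]
    apply congrArg w
    apply Fin.ext
    simp only [emb]; omega
  have hGtri : ∀ i j : Fin d, i < j → G i j = 0 := by
    intro i j hij
    show convFull d w (emb i) j = 0
    unfold convFull
    rw [Matrix.of_apply]
    split_ifs with hc
    · apply hmax
      have hij' : (i : ℕ) < (j : ℕ) := hij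
      simp only [emb] at hc ⊢
      omega
    · rfl
  have hdet : G.det = ∏ j, G j j :=
    Matrix.det_of_lowerTriangular G (fun i j h => hGtri i j h)
  have hunit : IsUnit G.det := by
    rw [hdet]
    apply isUnit_iff_ne_zero.2
    rw [Finset.prod_ne_zero_iff]
    intro j _
    rw [hGdiag j]; exact hws
  let P : Matrix (Fin d) (Fin (d + d₁ - 1)) ℝ := fun j i => if i = emb j then 1 else 0
  have hPG : P * convFull d w = G := by
    ext j j'
    rw [Matrix.mul_apply]
    have h1 : ∀ i, P j i * convFull d w i j' =
        if i = emb j then convFull d w i j' else 0 := by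
      intro i
      by_cases h : i = emb j <;> simp [P, h]
    rw [Finset.sum_congr rfl fun i _ => h1 i]
    simp [G]
  refine ⟨M * G⁻¹ * P, ?_⟩
  rw [Matrix.mul_assoc (M * G⁻¹) P, hPG, Matrix.mul_assoc M G⁻¹ G,
    Matrix.nonsing_inv_mul G hunit, Matrix.mul_one]

lemma convFull_entry_smul (d : ℕ) {d₁ : ℕ} (t : ℝ) (w : Fin d₁ → ℝ)
    (i : Fin (d + d₁ - 1)) (j : Fin d) :
    convFull d (t • w) i j = t * convFull d w i j := by
  unfold convFull
  rw [Matrix.of_apply, Matrix.of_apply]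
  split_ifs with h
  · rfl
  · ring

lemma assemble {d d₁ dy p₁ : ℕ} (c : Fin p₁) (V : Matrix (Fin dy) (Fin (d + d₁ - 1)) ℝ)
    (W : Fin p₁ → Fin d₁ → ℝ) :
    (Matrix.of fun (a : Fin dy) (ci : Fin p₁ × Fin (d + d₁ - 1)) =>
        if ci.1 = c then V a ci.2 else 0) *
      (Matrix.of fun (ci : Fin p₁ × Fin (d + d₁ - 1)) (j : Fin d) =>
        convFull d (W ci.1) ci.2 j) = V * convFull d (W c) := by
  classical
  ext a j
  rw [Matrix.mul_apply, Matrix.mul_apply, Fintype.sum_prod_type]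
  have h1 : ∀ c' : Fin p₁,
      (∑ i, (Matrix.of fun (a : Fin dy) (ci : Fin p₁ × Fin (d + d₁ - 1)) =>
          if ci.1 = c then V a ci.2 else 0) a (c', i) *
        (Matrix.of fun (ci : Fin p₁ × Fin (d + d₁ - 1)) (j : Fin d) =>
          convFull d (W ci.1) ci.2 j) (c', i) j)
      = if c' = c then ∑ i, V a i * convFull d (W c) i j else 0 := by
    intro c'
    by_cases h : c' = c <;> simp [h]
  rw [Finset.sum_congr rfl fun c' _ => h1 c']
  simp

lemma joinedIn_segment {E : Type*} [AddCommGroup E] [Module ℝ E] [TopologicalSpace E]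
    [IsTopologicalAddGroup E] [ContinuousSMul ℝ E] {s : Set E} {a b : E}
    (h : ∀ t : ℝ, 0 ≤ t → t ≤ 1 → (1 - t) • a + t • b ∈ s) : JoinedIn s a b := by
  refine ⟨⟨⟨fun t => (1 - (t : ℝ)) • a + (t : ℝ) • b, by fun_prop⟩, by simp, by simp⟩,
    fun t => h t t.2.1 t.2.2⟩

/-- The one-hidden-layer linear CNN in FULL mode,
`L(U, w₁,…,w_{p₁}) = (1/2)‖U F(W) X − Y‖_F²`, has no spurious valleys for every number of
channels `p₁ ≥ 1`. -/
theorem linear_cnn_full_no_spurious_valleys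
    (d d₁ n dy p₁ : ℕ) (hp : 1 ≤ p₁)
    (X : Matrix (Fin d) (Fin n) ℝ) (Y : Matrix (Fin dy) (Fin n) ℝ)
    (L : ((Fin dy → (Fin p₁ × Fin (d + d₁ - 1)) → ℝ) × (Fin p₁ → Fin d₁ → ℝ)) → ℝ)
    (hL : ∀ θ, L θ = (1 / 2) * frobSq
      (Matrix.of θ.1 *
        Matrix.of (fun (ci : Fin p₁ × Fin (d + d₁ - 1)) (j : Fin d) =>
          convFull d (θ.2 ci.1) ci.2 j) * X - Y)) :
    ∀ (α : ℝ) θ0, L θ0 ≤ α →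
      ¬ (⨅ θ, L θ) < sInf (L '' pathComponentIn {θ | L θ ≤ α} θ0) := by
  classical
  intro α θ0 hθ0 hlt
  have hLp : ∀ (U : Fin dy → (Fin p₁ × Fin (d + d₁ - 1)) → ℝ) (W : Fin p₁ → Fin d₁ → ℝ),
      L (U, W) = (1 / 2) * frobSq
        (Matrix.of U *
          Matrix.of (fun (ci : Fin p₁ × Fin (d + d₁ - 1)) (j : Fin d) =>
            convFull d (W ci.1) ci.2 j) * X - Y) := fun U W => hL (U, W)
  have key : ∃ θs, JoinedIn {θ | L θ ≤ α} θ0 θs ∧ ∀ θ, L θs ≤ L θ := by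
    by_cases hdeg : d = 0 ∨ d₁ = 0
    · refine ⟨θ0, JoinedIn.refl hθ0, fun θ => ?_⟩
      have hzero : ∀ θ' : (Fin dy → (Fin p₁ × Fin (d + d₁ - 1)) → ℝ) × (Fin p₁ → Fin d₁ → ℝ),
          Matrix.of θ'.1 *
            Matrix.of (fun (ci : Fin p₁ × Fin (d + d₁ - 1)) (j : Fin d) =>
              convFull d (θ'.2 ci.1) ci.2 j) * X = 0 := by
        intro θ'
        rcases hdeg with h | h
        · subst h
          ext i j
          rw [Matrix.mul_apply]
          simp
        · subst h
          have hF : (Matrix.of (fun (ci : Fin p₁ × Fin (d + 0 - 1)) (j : Fin d) =>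
              convFull d (θ'.2 ci.1) ci.2 j)) = 0 := by
            ext ci j
            rw [Matrix.of_apply]
            unfold convFull
            rw [Matrix.of_apply, dif_neg (by omega)]
            simp
          rw [hF, Matrix.mul_zero, Matrix.zero_mul]
      rw [hL θ, hL θ0, hzero θ, hzero θ0]
    · push_neg at hdeg
      have hd : 1 ≤ d := by omega
      have hd₁ : 1 ≤ d₁ := by omega
      obtain ⟨Mh, hMh⟩ := exists_lsq X Y
      have hglob : ∀ θ, (1 / 2) * frobSq (Mh * X - Y) ≤ L θ := by
        intro θ
        rw [hL θ]
        have := hMh (Matrix.of θ.1 *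
          Matrix.of (fun (ci : Fin p₁ × Fin (d + d₁ - 1)) (j : Fin d) =>
            convFull d (θ.2 ci.1) ci.2 j))
        linarith
      by_cases hW : θ0.2 = 0
      · -- all filters zero: go through (Uh, 0) then scale up the delta filters
        set c0 : Fin p₁ := ⟨0, hp⟩ with hc0
        set ws : Fin d₁ → ℝ := fun k => if (k : ℕ) = 0 then 1 else 0 with hws
        have hwsne : ws ≠ 0 := by
          intro h
          have := congrFun h ⟨0, hd₁⟩
          simp [hws] at this
        obtain ⟨V, hV⟩ := exists_left_solve hd hd₁ ws hwsne Mh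
        set Ws : Fin p₁ → Fin d₁ → ℝ := fun c => if c = c0 then ws else 0 with hWs
        set Uh : Fin dy → (Fin p₁ × Fin (d + d₁ - 1)) → ℝ :=
          fun a ci => if ci.1 = c0 then V a ci.2 else 0 with hUh
        have hprod : Matrix.of Uh *
            Matrix.of (fun (ci : Fin p₁ × Fin (d + d₁ - 1)) (j : Fin d) =>
              convFull d (Ws ci.1) ci.2 j) = Mh := by
          rw [hUh, assemble c0 V Ws]
          have h1 : Ws c0 = ws := by rw [hWs]; simp
          rw [h1, hV]
        have hzeroW : ∀ U : Fin dy → (Fin p₁ × Fin (d + d₁ - 1)) → ℝ,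
            Matrix.of U *
              Matrix.of (fun (ci : Fin p₁ × Fin (d + d₁ - 1)) (j : Fin d) =>
                convFull d (θ0.2 ci.1) ci.2 j) * X = 0 := by
          intro U
          have hF : (Matrix.of (fun (ci : Fin p₁ × Fin (d + d₁ - 1)) (j : Fin d) =>
              convFull d (θ0.2 ci.1) ci.2 j)) = 0 := by
            ext ci j
            rw [Matrix.of_apply, hW]
            unfold convFull
            rw [Matrix.of_apply]
            split_ifs with h <;> simp
          rw [hF, Matrix.mul_zero, Matrix.zero_mul]
        have hconst : L θ0 = (1 / 2) * frobSq ((0 : Matrix (Fin dy) (Fin n) ℝ) - Y) := by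
          rw [hL θ0, hzeroW θ0.1]
        have J1 : JoinedIn {θ | L θ ≤ α} θ0 (Uh, θ0.2) := by
          apply joinedIn_segment
          intro t ht0 ht1
          have hpt : (1 - t) • θ0 + t • ((Uh, θ0.2) :
              (Fin dy → (Fin p₁ × Fin (d + d₁ - 1)) → ℝ) × (Fin p₁ → Fin d₁ → ℝ)) =
              ((1 - t) • θ0.1 + t • Uh, θ0.2) := by
            apply Prod.ext
            · rfl
            · show (1 - t) • θ0.2 + t • θ0.2 = θ0.2
              rw [← add_smul]
              simp
          rw [Set.mem_setOf_eq, hpt, hLp, hzeroW]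
          rw [← hconst]
          exact hθ0
        have J2 : JoinedIn {θ | L θ ≤ α} (Uh, θ0.2) (Uh, Ws) := by
          apply joinedIn_segment
          intro t ht0 ht1
          have hpt : (1 - t) • ((Uh, θ0.2) :
              (Fin dy → (Fin p₁ × Fin (d + d₁ - 1)) → ℝ) × (Fin p₁ → Fin d₁ → ℝ)) +
              t • ((Uh, Ws) :
              (Fin dy → (Fin p₁ × Fin (d + d₁ - 1)) → ℝ) × (Fin p₁ → Fin d₁ → ℝ)) =
              (Uh, t • Ws) := by
            apply Prod.ext
            · show (1 - t) • Uh + t • Uh = Uh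
              rw [← add_smul]
              simp
            · show (1 - t) • θ0.2 + t • Ws = t • Ws
              rw [hW]
              simp
          rw [Set.mem_setOf_eq, hpt, hLp]
          have hFs : (Matrix.of fun (ci : Fin p₁ × Fin (d + d₁ - 1)) (j : Fin d) =>
              convFull d ((t • Ws) ci.1) ci.2 j)
              = t • (Matrix.of fun (ci : Fin p₁ × Fin (d + d₁ - 1)) (j : Fin d) =>
              convFull d (Ws ci.1) ci.2 j) := by
            ext ci j
            rw [Matrix.smul_apply, Matrix.of_apply, Matrix.of_apply]
            have h1 : (t • Ws) ci.1 = t • Ws ci.1 := rfl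
            rw [h1, convFull_entry_smul]
            rfl
          rw [hFs, Matrix.mul_smul, Matrix.smul_mul, hprod]
          have hcombo := half_frobSq_combo Y 0 (Mh * X) t ht0 ht1
          rw [smul_zero, zero_add] at hcombo
          refine hcombo.trans (max_le ?_ ?_)
          · rw [← hconst]
            exact hθ0
          · exact (hglob θ0).trans hθ0
        refine ⟨(Uh, Ws), J1.trans J2, fun θ => ?_⟩
        rw [hLp Uh Ws, hprod]
        exact hglob θ
      · -- some filter is nonzero
        obtain ⟨c, hc⟩ : ∃ c, θ0.2 c ≠ 0 := by
          by_contra h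
          push_neg at h
          exact hW (funext fun c => h c)
        obtain ⟨V, hV⟩ := exists_left_solve hd hd₁ (θ0.2 c) hc Mh
        set Uh : Fin dy → (Fin p₁ × Fin (d + d₁ - 1)) → ℝ :=
          fun a ci => if ci.1 = c then V a ci.2 else 0 with hUh
        have hprod : Matrix.of Uh *
            Matrix.of (fun (ci : Fin p₁ × Fin (d + d₁ - 1)) (j : Fin d) =>
              convFull d (θ0.2 ci.1) ci.2 j) = Mh := by
          rw [hUh, assemble c V θ0.2, hV]
        have J1 : JoinedIn {θ | L θ ≤ α} θ0 (Uh, θ0.2) := by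
          apply joinedIn_segment
          intro t ht0 ht1
          have hpt : (1 - t) • θ0 + t • ((Uh, θ0.2) :
              (Fin dy → (Fin p₁ × Fin (d + d₁ - 1)) → ℝ) × (Fin p₁ → Fin d₁ → ℝ)) =
              ((1 - t) • θ0.1 + t • Uh, θ0.2) := by
            apply Prod.ext
            · rfl
            · show (1 - t) • θ0.2 + t • θ0.2 = θ0.2
              rw [← add_smul]
              simp
          rw [Set.mem_setOf_eq, hpt, hLp]
          have hofc : Matrix.of ((1 - t) • θ0.1 + t • Uh) =
              (1 - t) • Matrix.of θ0.1 + t • Matrix.of Uh := rfl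
          rw [hofc]
          simp only [Matrix.add_mul, Matrix.smul_mul]
          rw [hprod]
          refine (half_frobSq_combo Y _ _ t ht0 ht1).trans (max_le ?_ ?_)
          · rw [← hL θ0]
            exact hθ0
          · exact (hglob θ0).trans hθ0
        refine ⟨(Uh, θ0.2), J1, fun θ => ?_⟩
        rw [hLp Uh θ0.2, hprod]
        exact hglob θ
  obtain ⟨θs, hmem, hminθ⟩ := key
  have hbdd : BddBelow (L '' pathComponentIn {θ | L θ ≤ α} θ0) := by
    refine ⟨L θs, ?_⟩
    rintro x ⟨θ, _, rfl⟩
    exact hminθ θ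
  have h1 : sInf (L '' pathComponentIn {θ | L θ ≤ α} θ0) ≤ L θs :=
    csInf_le hbdd ⟨θs, hmem, rfl⟩
  have h2 : L θs ≤ ⨅ θ, L θ := le_ciInf hminθ
  exact absurd hlt (not_lt.2 (h1.trans h2))
end

section
/- For the one-hidden-layer linear CNN in SAME mode, the loss L(U, w_1,…,w_{p_1}) = (1/2)‖U F(W) X − Y‖_F², where F(W) vertically stacks f_S(w_1),…,f_S(w_{p_1}), has no spurious valleys whenever the number of channels satisfies p_1 ≥ 2: there is no path-connected component T of a sublevel set {θ : L(θ) ≤ α} with inf_{θ∈T} L(θ) > inf L. -/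
open scoped BigOperators Matrix

/-- SAME-mode 1-D convolution matrix (stride 1) of a kernel `w ∈ ℝ^{d₁}`:
`(f_S(w))_{ij} = w_{j−i+1}` (1-indexed) when that index is in range, else `0`. -/
noncomputable def convSame (d : ℕ) {d₁ : ℕ} (w : Fin d₁ → ℝ) : Matrix (Fin d) (Fin d) ℝ :=
  Matrix.of fun i j =>
    if h : (i : ℕ) ≤ j ∧ (j : ℕ) < i + d₁ then w ⟨j - i, by omega⟩ else 0

namespace CNNAux

noncomputable def Nmat (d : ℕ) : Matrix (Fin d) (Fin d) ℝ :=
  Matrix.of fun i j => if (j : ℕ) = (i : ℕ) + 1 then 1 else 0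

lemma Nmat_pow_apply (d k : ℕ) (i j : Fin d) :
    (Nmat d ^ k) i j = if (j : ℕ) = (i : ℕ) + k then 1 else 0 := by
  induction k generalizing j with
  | zero =>
    simp only [pow_zero, Matrix.one_apply, Nat.add_zero]
    by_cases h : i = j
    · subst h; simp
    · rw [if_neg h, if_neg (by simpa [Fin.ext_iff, eq_comm] using h)]
  | succ k ih =>
    rw [pow_succ, Matrix.mul_apply]
    by_cases hj : (j : ℕ) = (i : ℕ) + (k + 1)
    · have hlt : (i : ℕ) + k < d := by omega
      rw [Finset.sum_eq_single (⟨(i : ℕ) + k, hlt⟩ : Fin d)]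
      · rw [ih, if_pos rfl]
        simp [Nmat, hj]; omega
      · intro l _ hl
        rw [ih]
        by_cases hli : (l : ℕ) = (i : ℕ) + k
        · exact absurd (Fin.ext hli) hl
        · rw [if_neg hli, zero_mul]
      · intro h; exact absurd (Finset.mem_univ _) h
    · rw [if_neg hj]
      apply Finset.sum_eq_zero
      intro l _
      rw [ih]
      by_cases hli : (l : ℕ) = (i : ℕ) + k
      · have : ¬ ((j : ℕ) = (l : ℕ) + 1) := by omega
        simp [Nmat, this]
      · rw [if_neg hli, zero_mul]

lemma Nmat_pow_d (d : ℕ) : Nmat d ^ d = 0 := by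
  ext i j
  rw [Nmat_pow_apply]
  have : ¬ ((j : ℕ) = (i : ℕ) + d) := by omega
  simp [this]

lemma convSame_eq_sum (d d₁ : ℕ) (w : Fin d₁ → ℝ) :
    convSame d w = ∑ k : Fin d₁, w k • Nmat d ^ (k : ℕ) := by
  ext i j
  rw [Matrix.sum_apply]
  simp only [Matrix.smul_apply, Nmat_pow_apply, smul_eq_mul]
  unfold convSame
  by_cases h : (i : ℕ) ≤ j ∧ (j : ℕ) < i + d₁
  · rw [Matrix.of_apply, dif_pos h]
    rw [Finset.sum_eq_single (⟨(j : ℕ) - i, by omega⟩ : Fin d₁)]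
    · rw [if_pos (by simp; omega)]
      ring
    · intro k _ hk
      have : ¬ ((j : ℕ) = (i : ℕ) + k) := by
        intro hc
        exact hk (Fin.ext (by simp; omega))
      rw [if_neg this, mul_zero]
    · intro h'; exact absurd (Finset.mem_univ _) h'
  · rw [Matrix.of_apply, dif_neg h]
    apply (Finset.sum_eq_zero _).symm
    intro k _
    have : ¬ ((j : ℕ) = (i : ℕ) + k) := by
      intro hc
      exact h ⟨by omega, by omega⟩
    rw [if_neg this, mul_zero]

end CNNAux

open Polynomial in
noncomputable def polOf (d₁ : ℕ) (w : Fin d₁ → ℝ) : Polynomial ℝ :=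
  ∑ k : Fin d₁, Polynomial.C (w k) * Polynomial.X ^ (k : ℕ)

lemma convSame_eq_aeval (d d₁ : ℕ) (w : Fin d₁ → ℝ) :
    convSame d w = Polynomial.aeval (CNNAux.Nmat d) (polOf d₁ w) := by
  rw [CNNAux.convSame_eq_sum, polOf, map_sum]
  refine Finset.sum_congr rfl fun k _ => ?_
  rw [map_mul, Polynomial.aeval_C, map_pow, Polynomial.aeval_X, Algebra.smul_def]

lemma isUnit_aeval_Nmat (d : ℕ) (r : Polynomial ℝ) (h : r.coeff 0 ≠ 0) :
    IsUnit (Polynomial.aeval (CNNAux.Nmat d) r) := by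
  have hr : r = Polynomial.C (r.coeff 0) + Polynomial.X * r.divX := by
    rw [add_comm, Polynomial.X_mul_divX_add]
  have hN : IsNilpotent (CNNAux.Nmat d) := ⟨d, CNNAux.Nmat_pow_d d⟩
  have hc : Commute (CNNAux.Nmat d) (Polynomial.aeval (CNNAux.Nmat d) r.divX) := by
    have := (Commute.all Polynomial.X r.divX).map (Polynomial.aeval (CNNAux.Nmat d))
    simpa using this
  have hnil : IsNilpotent (CNNAux.Nmat d * Polynomial.aeval (CNNAux.Nmat d) r.divX) :=
    hc.isNilpotent_mul_right hN
  have hmain : Polynomial.aeval (CNNAux.Nmat d) r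
      = algebraMap ℝ _ (r.coeff 0) + CNNAux.Nmat d * Polynomial.aeval (CNNAux.Nmat d) r.divX := by
    conv_lhs => rw [hr]
    rw [map_add, map_mul, Polynomial.aeval_C, Polynomial.aeval_X]
  rw [hmain]
  refine hnil.isUnit_add_left_of_commute
    (IsUnit.map (algebraMap ℝ (Matrix (Fin d) (Fin d) ℝ)) (isUnit_iff_ne_zero.2 h)) ?_
  show _ * _ = _ * _
  exact (Algebra.commutes _ _).symm

open Polynomial in
lemma exists_left_factor (d : ℕ) (p q : Polynomial ℝ) (hp : p ≠ 0) (hq : q ≠ 0)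
    (h : p.natTrailingDegree ≤ q.natTrailingDegree) :
    ∃ T : Matrix (Fin d) (Fin d) ℝ,
      Polynomial.aeval (CNNAux.Nmat d) q = T * Polynomial.aeval (CNNAux.Nmat d) p := by
  set u := p.natTrailingDegree with hu
  set v := q.natTrailingDegree with hv
  obtain ⟨p₁, hp₁⟩ : (Polynomial.X : ℝ[X]) ^ u ∣ p :=
    Polynomial.X_pow_dvd_iff.2 fun m hm => Polynomial.coeff_eq_zero_of_lt_natTrailingDegree hm
  obtain ⟨q₁, hq₁⟩ : (Polynomial.X : ℝ[X]) ^ v ∣ q :=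
    Polynomial.X_pow_dvd_iff.2 fun m hm => Polynomial.coeff_eq_zero_of_lt_natTrailingDegree hm
  have hp₁0 : p₁.coeff 0 ≠ 0 := by
    have h1 : p.coeff u ≠ 0 := Polynomial.coeff_natTrailingDegree_ne_zero.2 hp
    rw [hp₁] at h1
    have h2 := Polynomial.coeff_X_pow_mul p₁ u 0
    rw [zero_add] at h2
    rwa [h2] at h1
  have hunit := isUnit_aeval_Nmat d p₁ hp₁0
  set W := hunit.unit with hWdef
  set Wm : Matrix (Fin d) (Fin d) ℝ := (W : Matrix (Fin d) (Fin d) ℝ) with hWm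
  set Wi : Matrix (Fin d) (Fin d) ℝ := ((W⁻¹ : (Matrix (Fin d) (Fin d) ℝ)ˣ) : Matrix (Fin d) (Fin d) ℝ) with hWi
  have hWval : Wm = Polynomial.aeval (CNNAux.Nmat d) p₁ := rfl
  have hWiW : Wi * Wm = 1 := W.inv_mul
  set A : Matrix (Fin d) (Fin d) ℝ :=
    Polynomial.aeval (CNNAux.Nmat d) (Polynomial.X ^ (v - u) * q₁) with hA
  set B : Matrix (Fin d) (Fin d) ℝ := Polynomial.aeval (CNNAux.Nmat d) ((Polynomial.X : Polynomial ℝ) ^ u) with hB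
  have hcomm : Wm * B = B * Wm := by
    rw [hWval, hB, ← map_mul, ← map_mul, mul_comm]
  refine ⟨A * Wi, ?_⟩
  have hq2 : Polynomial.aeval (CNNAux.Nmat d) q = A * B := by
    rw [hA, hB, ← map_mul]
    congr 1
    rw [hq₁, mul_right_comm, ← pow_add, Nat.sub_add_cancel h]
  have hp2 : Polynomial.aeval (CNNAux.Nmat d) p = B * Wm := by
    rw [hp₁, map_mul, hB, hWval]
  calc Polynomial.aeval (CNNAux.Nmat d) q = A * B := hq2
    _ = A * (Wi * (Wm * B)) := by rw [← mul_assoc Wi, hWiW, one_mul]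
    _ = A * Wi * (B * Wm) := by rw [hcomm, ← mul_assoc, ← mul_assoc]
    _ = A * Wi * Polynomial.aeval (CNNAux.Nmat d) p := by rw [hp2]

lemma conv_factor (d d₁ : ℕ) (a b : Fin d₁ → ℝ) :
    ∃ T : Matrix (Fin d) (Fin d) ℝ,
      convSame d b = T * convSame d a ∨ convSame d a = T * convSame d b := by
  by_cases hpa : polOf d₁ a = 0
  · exact ⟨0, Or.inr (by rw [convSame_eq_aeval, hpa]; simp)⟩
  by_cases hpb : polOf d₁ b = 0
  · exact ⟨0, Or.inl (by rw [convSame_eq_aeval, hpb]; simp)⟩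
  rcases le_total (polOf d₁ a).natTrailingDegree (polOf d₁ b).natTrailingDegree with h | h
  · obtain ⟨T, hT⟩ := exists_left_factor d (polOf d₁ a) (polOf d₁ b) hpa hpb h
    exact ⟨T, Or.inl (by rw [convSame_eq_aeval, convSame_eq_aeval, hT])⟩
  · obtain ⟨T, hT⟩ := exists_left_factor d (polOf d₁ b) (polOf d₁ a) hpb hpa h
    exact ⟨T, Or.inr (by rw [convSame_eq_aeval, convSame_eq_aeval, hT])⟩

namespace CNNAux

variable {d d₁ n dy p₁ : ℕ}

noncomputable def FmatM (d d₁ p₁ : ℕ) (W : Fin p₁ → Fin d₁ → ℝ) :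
    Matrix (Fin p₁ × Fin d) (Fin d) ℝ :=
  Matrix.of fun ci j => convSame d (W ci.1) ci.2 j

noncomputable def blockOf (d dy p₁ : ℕ) (U : Fin dy → (Fin p₁ × Fin d) → ℝ) (c : Fin p₁) :
    Matrix (Fin dy) (Fin d) ℝ :=
  Matrix.of fun i k => U i (c, k)

lemma of_mul_Fmat (U : Fin dy → (Fin p₁ × Fin d) → ℝ) (W : Fin p₁ → Fin d₁ → ℝ) :
    Matrix.of U * FmatM d d₁ p₁ W = ∑ c : Fin p₁, blockOf d dy p₁ U c * convSame d (W c) := by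
  ext i j
  rw [Matrix.mul_apply, Matrix.sum_apply, Fintype.sum_prod_type]
  refine Finset.sum_congr rfl fun c _ => ?_
  rw [Matrix.mul_apply]
  rfl

lemma frobSq_nonneg {m' n' : Type*} [Fintype m'] [Fintype n'] (M : Matrix m' n' ℝ) :
    0 ≤ frobSq M :=
  Finset.sum_nonneg fun _ _ => Finset.sum_nonneg fun _ _ => sq_nonneg _

lemma frobSq_convex {m' n' : Type*} [Fintype m'] [Fintype n'] (A B : Matrix m' n' ℝ)
    (s t : ℝ) (hs : 0 ≤ s) (ht : 0 ≤ t) (hst : s + t = 1) :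
    frobSq (s • A + t • B) ≤ s * frobSq A + t * frobSq B := by
  unfold frobSq
  rw [Finset.mul_sum, Finset.mul_sum, ← Finset.sum_add_distrib]
  refine Finset.sum_le_sum fun i _ => ?_
  rw [Finset.mul_sum, Finset.mul_sum, ← Finset.sum_add_distrib]
  refine Finset.sum_le_sum fun j _ => ?_
  simp only [Matrix.add_apply, Matrix.smul_apply, smul_eq_mul]
  nlinarith [sq_nonneg (A i j - B i j), mul_nonneg hs ht]

lemma joinedIn_segment {E : Type*} [AddCommGroup E] [Module ℝ E] [TopologicalSpace E]
    [IsTopologicalAddGroup E] [ContinuousSMul ℝ E] {F : Set E} {x y : E}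
    (h : ∀ t : ℝ, 0 ≤ t → t ≤ 1 → ((1 - t) • x + t • y) ∈ F) : JoinedIn F x y := by
  refine ⟨⟨⟨fun t => (1 - (t : ℝ)) • x + (t : ℝ) • y, ?_⟩, ?_, ?_⟩,
    fun t => h t t.2.1 t.2.2⟩
  · exact ((continuous_const.sub continuous_subtype_val).smul continuous_const).add
      (continuous_subtype_val.smul continuous_const)
  · simp
  · simp

lemma conv_e1 (d d₁ : ℕ) (hd₁ : 0 < d₁) :
    convSame d (fun k : Fin d₁ => if (k : ℕ) = 0 then (1 : ℝ) else 0) = 1 := by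
  rw [convSame_eq_sum]
  rw [Finset.sum_eq_single (⟨0, hd₁⟩ : Fin d₁)]
  · simp
  · intro k _ hk
    have : ¬ ((k : ℕ) = 0) := fun hc => hk (Fin.ext hc)
    simp [this]
  · intro h; exact absurd (Finset.mem_univ _) h

end CNNAux

namespace CNNAux

noncomputable def gFun (d dy n : ℕ) (X : Matrix (Fin d) (Fin n) ℝ)
    (Y : Matrix (Fin dy) (Fin n) ℝ) (M : Matrix (Fin dy) (Fin d) ℝ) : ℝ :=
  (1 / 2) * frobSq (M * X - Y)

lemma gFun_nonneg (d dy n : ℕ) (X : Matrix (Fin d) (Fin n) ℝ)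
    (Y : Matrix (Fin dy) (Fin n) ℝ) (M : Matrix (Fin dy) (Fin d) ℝ) :
    0 ≤ gFun d dy n X Y M :=
  mul_nonneg (by norm_num) (frobSq_nonneg _)

lemma gFun_convex (d dy n : ℕ) (X : Matrix (Fin d) (Fin n) ℝ)
    (Y : Matrix (Fin dy) (Fin n) ℝ) (s t : ℝ) (M M' : Matrix (Fin dy) (Fin d) ℝ)
    (hs : 0 ≤ s) (ht : 0 ≤ t) (hst : s + t = 1) :
    gFun d dy n X Y (s • M + t • M') ≤ s * gFun d dy n X Y M + t * gFun d dy n X Y M' := by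
  have hY : s • Y + t • Y = Y := by rw [← add_smul, hst, one_smul]
  have hEq : (s • M + t • M') * X - Y = s • (M * X - Y) + t • (M' * X - Y) := by
    rw [Matrix.add_mul, Matrix.smul_mul, Matrix.smul_mul, smul_sub, smul_sub]
    conv_lhs => rw [← hY]
    abel
  unfold gFun
  rw [hEq]
  have := frobSq_convex (M * X - Y) (M' * X - Y) s t hs ht hst
  linarith

lemma build (d d₁ n dy p₁ : ℕ) (hd₁ : 0 < d₁)
    (X : Matrix (Fin d) (Fin n) ℝ) (Y : Matrix (Fin dy) (Fin n) ℝ)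
    (L : ((Fin dy → (Fin p₁ × Fin d) → ℝ) × (Fin p₁ → Fin d₁ → ℝ)) → ℝ)
    (hL : ∀ θ, L θ = (1 / 2) * frobSq (Matrix.of θ.1 * FmatM d d₁ p₁ θ.2 * X - Y))
    (α : ℝ) (θ0 θt : ((Fin dy → (Fin p₁ × Fin d) → ℝ) × (Fin p₁ → Fin d₁ → ℝ)))
    (h0 : L θ0 ≤ α) (hle : L θt ≤ L θ0)
    (i j : Fin p₁) (hij : j ≠ i) (T : Matrix (Fin d) (Fin d) ℝ)
    (hT : convSame d (θ0.2 j) = T * convSame d (θ0.2 i)) :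
    ∃ θ', θ' ∈ pathComponentIn {θ | L θ ≤ α} θ0 ∧ L θ' ≤ L θt := by
  have hLg : ∀ θ, L θ = gFun d dy n X Y (Matrix.of θ.1 * FmatM d d₁ p₁ θ.2) := fun θ => hL θ
  obtain ⟨U0, W0⟩ := θ0
  set Bj := blockOf d dy p₁ U0 j with hBjdef
  set E := Bj * T with hEdef
  set U1 : Fin dy → (Fin p₁ × Fin d) → ℝ :=
    fun r x => if x.1 = i then U0 r x + E r x.2 else if x.1 = j then 0 else U0 r x with hU1def
  have hblock1i : blockOf d dy p₁ U1 i = blockOf d dy p₁ U0 i + E := by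
    ext r k; simp [blockOf, hU1def]
  have hblock1j : blockOf d dy p₁ U1 j = 0 := by
    ext r k; simp [blockOf, hU1def, hij]
  have hblock1c : ∀ c, c ≠ i → c ≠ j → blockOf d dy p₁ U1 c = blockOf d dy p₁ U0 c := by
    intro c hci hcj; ext r k; simp [blockOf, hU1def, hci, hcj]
  have hM1 : Matrix.of U1 * FmatM d d₁ p₁ W0 = Matrix.of U0 * FmatM d d₁ p₁ W0 := by
    rw [of_mul_Fmat, of_mul_Fmat]
    have hiu : i ∈ Finset.univ := Finset.mem_univ i
    have hju : j ∈ Finset.univ.erase i := Finset.mem_erase.2 ⟨hij, Finset.mem_univ j⟩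
    rw [← Finset.add_sum_erase _ (fun c => blockOf d dy p₁ U1 c * convSame d (W0 c)) hiu,
        ← Finset.add_sum_erase _ (fun c => blockOf d dy p₁ U1 c * convSame d (W0 c)) hju,
        ← Finset.add_sum_erase _ (fun c => blockOf d dy p₁ U0 c * convSame d (W0 c)) hiu,
        ← Finset.add_sum_erase _ (fun c => blockOf d dy p₁ U0 c * convSame d (W0 c)) hju]
    have hrest : ∑ c ∈ (Finset.univ.erase i).erase j, blockOf d dy p₁ U1 c * convSame d (W0 c)
        = ∑ c ∈ (Finset.univ.erase i).erase j, blockOf d dy p₁ U0 c * convSame d (W0 c) := by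
      refine Finset.sum_congr rfl fun c hc => ?_
      have hcj : c ≠ j := (Finset.mem_erase.1 hc).1
      have hci : c ≠ i := (Finset.mem_erase.1 (Finset.mem_erase.1 hc).2).1
      rw [hblock1c c hci hcj]
    rw [hrest, hblock1i, hblock1j, Matrix.add_mul, hEdef, Matrix.mul_assoc, ← hT,
      Matrix.zero_mul]
    abel
  set e1 : Fin d₁ → ℝ := fun k => if (k : ℕ) = 0 then 1 else 0 with he1def
  have hce1 : convSame d e1 = 1 := conv_e1 d d₁ hd₁
  set W1 := Function.update W0 j e1 with hW1def
  have hMW : ∀ W' : Fin p₁ → Fin d₁ → ℝ, (∀ c, c ≠ j → W' c = W0 c) →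
      Matrix.of U1 * FmatM d d₁ p₁ W' = Matrix.of U1 * FmatM d d₁ p₁ W0 := by
    intro W' hW'
    rw [of_mul_Fmat, of_mul_Fmat]
    refine Finset.sum_congr rfl fun c _ => ?_
    by_cases hc : c = j
    · subst hc; rw [hblock1j, Matrix.zero_mul, Matrix.zero_mul]
    · rw [hW' c hc]
  set Mstar := Matrix.of θt.1 * FmatM d d₁ p₁ θt.2 with hMsdef
  set U3 : Fin dy → (Fin p₁ × Fin d) → ℝ :=
    fun r x => if x.1 = j then Mstar r x.2 else 0 with hU3def
  have hblock3 : ∀ c, c ≠ j → blockOf d dy p₁ U3 c = 0 := by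
    intro c hc; ext r k; simp [blockOf, hU3def, hc]
  have hblock3j : blockOf d dy p₁ U3 j = Mstar := by
    ext r k; simp [blockOf, hU3def]
  have hM3 : Matrix.of U3 * FmatM d d₁ p₁ W1 = Mstar := by
    rw [of_mul_Fmat, Finset.sum_eq_single j]
    · rw [hblock3j, hW1def, Function.update_self, hce1, Matrix.mul_one]
    · intro c _ hc; rw [hblock3 c hc, Matrix.zero_mul]
    · intro h; exact absurd (Finset.mem_univ _) h
  have haff : ∀ (A B : Fin dy → (Fin p₁ × Fin d) → ℝ) (W : Fin p₁ → Fin d₁ → ℝ) (s t : ℝ),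
      Matrix.of (s • A + t • B) * FmatM d d₁ p₁ W
        = s • (Matrix.of A * FmatM d d₁ p₁ W) + t • (Matrix.of B * FmatM d d₁ p₁ W) := by
    intro A B W s t
    ext r q
    simp only [Matrix.mul_apply, Matrix.add_apply, Matrix.smul_apply, Matrix.of_apply,
      Pi.add_apply, Pi.smul_apply, smul_eq_mul, Finset.mul_sum]
    rw [← Finset.sum_add_distrib]
    exact Finset.sum_congr rfl fun x _ => by ring
  have h1sub : ∀ t : ℝ, (1 : ℝ) - t + t = 1 := fun t => by ring
  have hαt : L θt ≤ α := le_trans hle h0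
  -- segment 1
  have seg1 : JoinedIn {θ | L θ ≤ α} (U0, W0) (U1, W0) := by
    apply joinedIn_segment
    intro t ht0 ht1
    have hpt : ((1 : ℝ) - t) • ((U0, W0) : (Fin dy → (Fin p₁ × Fin d) → ℝ) × (Fin p₁ → Fin d₁ → ℝ))
        + t • ((U1, W0) : (Fin dy → (Fin p₁ × Fin d) → ℝ) × (Fin p₁ → Fin d₁ → ℝ))
        = ((1 - t) • U0 + t • U1, W0) := by
      rw [Prod.smul_mk, Prod.smul_mk, Prod.mk_add_mk, ← add_smul, h1sub, one_smul]
    rw [hpt, Set.mem_setOf_eq, hLg]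
    dsimp only
    rw [haff, hM1, ← add_smul, h1sub, one_smul]
    exact le_trans (le_of_eq (hLg (U0, W0)).symm) h0
  -- segment 2
  have seg2 : JoinedIn {θ | L θ ≤ α} (U1, W0) (U1, W1) := by
    apply joinedIn_segment
    intro t ht0 ht1
    have hpt : ((1 : ℝ) - t) • ((U1, W0) : (Fin dy → (Fin p₁ × Fin d) → ℝ) × (Fin p₁ → Fin d₁ → ℝ))
        + t • ((U1, W1) : (Fin dy → (Fin p₁ × Fin d) → ℝ) × (Fin p₁ → Fin d₁ → ℝ))
        = (U1, (1 - t) • W0 + t • W1) := by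
      rw [Prod.smul_mk, Prod.smul_mk, Prod.mk_add_mk, ← add_smul, h1sub, one_smul]
    rw [hpt, Set.mem_setOf_eq, hLg]
    dsimp only
    rw [hMW ((1 - t) • W0 + t • W1) ?_, hM1]
    · exact le_trans (le_of_eq (hLg (U0, W0)).symm) h0
    · intro c hc
      have : W1 c = W0 c := by rw [hW1def, Function.update_of_ne hc]
      funext k
      simp only [Pi.add_apply, Pi.smul_apply, this]
      rw [← add_smul, h1sub, one_smul]
  -- segment 3
  have seg3 : JoinedIn {θ | L θ ≤ α} (U1, W1) (U3, W1) := by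
    apply joinedIn_segment
    intro t ht0 ht1
    have hpt : ((1 : ℝ) - t) • ((U1, W1) : (Fin dy → (Fin p₁ × Fin d) → ℝ) × (Fin p₁ → Fin d₁ → ℝ))
        + t • ((U3, W1) : (Fin dy → (Fin p₁ × Fin d) → ℝ) × (Fin p₁ → Fin d₁ → ℝ))
        = ((1 - t) • U1 + t • U3, W1) := by
      rw [Prod.smul_mk, Prod.smul_mk, Prod.mk_add_mk, ← add_smul, h1sub, one_smul]
    rw [hpt, Set.mem_setOf_eq, hLg]
    dsimp only
    rw [haff, hM3]
    have hU1W1 : Matrix.of U1 * FmatM d d₁ p₁ W1 = Matrix.of U0 * FmatM d d₁ p₁ W0 := by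
      rw [hMW W1 ?_, hM1]
      intro c hc
      rw [hW1def, Function.update_of_ne hc]
    rw [hU1W1]
    have hconv := gFun_convex d dy n X Y (1 - t) t
      (Matrix.of U0 * FmatM d d₁ p₁ W0) Mstar (by linarith) ht0 (h1sub t)
    have e0 : gFun d dy n X Y (Matrix.of U0 * FmatM d d₁ p₁ W0) = L (U0, W0) :=
      (hLg (U0, W0)).symm
    have et : gFun d dy n X Y Mstar = L θt := (hLg θt).symm
    rw [e0, et] at hconv
    nlinarith [hconv, h0, hαt, ht0, ht1]
  refine ⟨(U3, W1), ?_, ?_⟩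
  · exact (seg1.trans seg2).trans seg3
  · exact le_of_eq (by rw [hLg (U3, W1)]; dsimp only; rw [hM3]; exact (hLg θt).symm)

end CNNAux

/-- The one-hidden-layer linear CNN in SAME mode,
`L(U, w₁,…,w_{p₁}) = (1/2)‖U F(W) X − Y‖_F²`, has no spurious valleys whenever the number of
channels satisfies `p₁ ≥ 2`. -/
theorem linear_cnn_same_no_spurious_valleys
    (d d₁ n dy p₁ : ℕ) (hp : 2 ≤ p₁)
    (X : Matrix (Fin d) (Fin n) ℝ) (Y : Matrix (Fin dy) (Fin n) ℝ)
    (L : ((Fin dy → (Fin p₁ × Fin d) → ℝ) × (Fin p₁ → Fin d₁ → ℝ)) → ℝ)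
    (hL : ∀ θ, L θ = (1 / 2) * frobSq
      (Matrix.of θ.1 *
        Matrix.of (fun (ci : Fin p₁ × Fin d) (j : Fin d) =>
          convSame d (θ.2 ci.1) ci.2 j) * X - Y)) :
    ∀ (α : ℝ) θ0, L θ0 ≤ α →
      ¬ (⨅ θ, L θ) < sInf (L '' pathComponentIn {θ | L θ ≤ α} θ0) := by
  
  intro α θ0 hθ0
  rw [not_lt]
  have hL' : ∀ θ, L θ = (1 / 2) * frobSq
      (Matrix.of θ.1 * CNNAux.FmatM d d₁ p₁ θ.2 * X - Y) := fun θ => hL θ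
  have hLnn : ∀ θ, 0 ≤ L θ := by
    intro θ
    rw [hL' θ]
    exact mul_nonneg (by norm_num) (CNNAux.frobSq_nonneg _)
  have key : ∀ θt, ∃ θ', θ' ∈ pathComponentIn {θ | L θ ≤ α} θ0 ∧ L θ' ≤ L θt := by
    intro θt
    rcases le_total (L θ0) (L θt) with hc | hc
    · exact ⟨θ0, mem_pathComponentIn_self hθ0, hc⟩
    rcases Nat.eq_zero_or_pos d₁ with hd₁ | hd₁
    · refine ⟨θ0, mem_pathComponentIn_self hθ0, le_of_eq ?_⟩
      subst hd₁
      have hzero : ∀ (W : Fin p₁ → Fin 0 → ℝ),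
          CNNAux.FmatM d 0 p₁ W = (0 : Matrix (Fin p₁ × Fin d) (Fin d) ℝ) := by
        intro W
        ext ci j
        have : ¬ ((ci.2 : ℕ) ≤ j ∧ (j : ℕ) < ci.2 + 0) := by omega
        simp [CNNAux.FmatM, convSame, this]
      rw [hL' θ0, hL' θt, hzero θ0.2, hzero θt.2, Matrix.mul_zero, Matrix.mul_zero]
    · obtain ⟨T, hT⟩ := conv_factor d d₁ (θ0.2 ⟨0, by omega⟩) (θ0.2 ⟨1, by omega⟩)
      rcases hT with hT | hT
      · exact CNNAux.build d d₁ n dy p₁ hd₁ X Y L hL' α θ0 θt hθ0 hc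
          ⟨0, by omega⟩ ⟨1, by omega⟩ (by simp [Fin.ext_iff]) T hT
      · exact CNNAux.build d d₁ n dy p₁ hd₁ X Y L hL' α θ0 θt hθ0 hc
          ⟨1, by omega⟩ ⟨0, by omega⟩ (by simp [Fin.ext_iff]) T hT
  have hbdd : BddBelow (L '' pathComponentIn {θ | L θ ≤ α} θ0) := by
    refine ⟨0, fun z hz => ?_⟩
    obtain ⟨θ'', _, rfl⟩ := hz
    exact hLnn _
  refine le_ciInf fun θt => ?_
  obtain ⟨θ', hmem, hle⟩ := key θt
  exact le_trans (csInf_le hbdd ⟨θ', hmem, rfl⟩) hle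
end

section
/- For a nonzero kernel w ∈ ℝ^{d_1} and input dimension d, the SAME-mode convolution matrix satisfies rank(f_S(w)) = d − min{ i : w_i ≠ 0 } + 1, and rank(f_S(w)) = 0 when w = 0. -/
open scoped BigOperators Matrix

private lemma rank_submatrix_le' {r d : ℕ} (A : Matrix (Fin d) (Fin d) ℝ)
    (f g : Fin r → Fin d) : (A.submatrix f g).rank ≤ A.rank := by
  have hfac : A.submatrix f g =
      ((1 : Matrix (Fin d) (Fin d) ℝ).submatrix f id * A) *
        ((1 : Matrix (Fin d) (Fin d) ℝ).submatrix id g) := by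
    ext k l
    simp [Matrix.mul_apply, Matrix.one_apply, Finset.sum_ite_eq, Finset.sum_ite_eq',
      ite_and, Finset.mul_sum, Finset.sum_mul]
  calc (A.submatrix f g).rank ≤ (((1 : Matrix (Fin d) (Fin d) ℝ).submatrix f id) * A).rank := by
        rw [hfac]; exact Matrix.rank_mul_le_left _ _
    _ ≤ A.rank := Matrix.rank_mul_le_right _ _

/-- For a nonzero kernel `w`, `rank(f_S(w)) = d − min{i : wᵢ ≠ 0} + 1`
(with 1-indexed minimum; in 0-indexed form, if `i₀` is the least index with `w i₀ ≠ 0` then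
the rank is `d − i₀`), and `rank(f_S(0)) = 0`. -/
theorem conv_same_rank (d d₁ : ℕ) (w : Fin d₁ → ℝ) :
    (∀ i₀ : Fin d₁, w i₀ ≠ 0 → (∀ j : Fin d₁, (j : ℕ) < i₀ → w j = 0) →
      (convSame d w).rank = d - i₀) ∧
    (w = 0 → (convSame d w).rank = 0) := by
  constructor
  · intro i₀ hne hmin
    set M := convSame d w with hM
    set f : Fin (d - (i₀:ℕ)) → Fin d := fun k => ⟨k, by omega⟩ with hf
    set g : Fin (d - (i₀:ℕ)) → Fin d := fun k => ⟨(k : ℕ) + i₀, by omega⟩ with hg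
    -- lower bound
    have hlow : (d - (i₀:ℕ)) ≤ M.rank := by
      set N := M.submatrix f g with hN
      have htri : N.BlockTriangular id := by
        intro k l hkl
        simp only [id] at hkl
        have : N k l = if h : (k : ℕ) ≤ (l : ℕ) + i₀ ∧ (l : ℕ) + i₀ < k + d₁ then
            w ⟨(l : ℕ) + i₀ - k, by omega⟩ else 0 := rfl
        rw [this]
        split_ifs with h
        · exact hmin _ (by simp; omega)
        · rfl
      have hdiag : ∀ k : Fin (d - (i₀:ℕ)), N k k = w i₀ := by
        intro k
        have : N k k = if h : (k : ℕ) ≤ (k : ℕ) + i₀ ∧ (k : ℕ) + i₀ < k + d₁ then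
            w ⟨(k : ℕ) + i₀ - k, by omega⟩ else 0 := rfl
        rw [this, dif_pos ⟨by omega, by omega⟩]
        congr 1
        ext
        simp
      have hdet : N.det = (w i₀) ^ (d - (i₀:ℕ)) := by
        rw [Matrix.det_of_upperTriangular htri]
        simp [hdiag]
      have hunit : IsUnit N := by
        rw [Matrix.isUnit_iff_isUnit_det, hdet]
        exact (IsUnit.mk0 _ hne).pow _
      have := Matrix.rank_of_isUnit N hunit
      rw [Fintype.card_fin] at this
      calc (d - (i₀:ℕ)) = N.rank := this.symm
        _ ≤ M.rank := rank_submatrix_le' M f g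
    -- upper bound
    have hup : M.rank ≤ d - (i₀:ℕ) := by
      have hfac : M = (M.submatrix id g) * ((1 : Matrix (Fin d) (Fin d) ℝ).submatrix g id) := by
        ext i j
        rw [Matrix.mul_apply]
        by_cases hj : (i₀ : ℕ) ≤ (j : ℕ)
        · have hjd : (j : ℕ) < d := j.isLt
          set k₀ : Fin (d - (i₀:ℕ)) := ⟨(j : ℕ) - i₀, by omega⟩ with hk₀
          have hgk₀ : g k₀ = j := by ext; simp [hg, hk₀]; omega
          rw [Finset.sum_eq_single k₀]
          · simp [hgk₀, Matrix.one_apply]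
          · intro k _ hk
            have : g k ≠ j := by
              intro he
              apply hk
              have : (k : ℕ) + i₀ = (j : ℕ) := congrArg Fin.val he
              ext
              simp [hk₀]; omega
            simp [Matrix.one_apply, this]
          · intro h; exact absurd (Finset.mem_univ _) h
        · have hMij : M i j = 0 := by
            show (if h : (i : ℕ) ≤ j ∧ (j : ℕ) < i + d₁ then w ⟨(j:ℕ) - i, by omega⟩ else 0) = 0
            split_ifs with h
            · exact hmin _ (by simp; omega)
            · rfl
          rw [hMij]
          symm
          apply Finset.sum_eq_zero
          intro k _
          have : g k ≠ j := by
            intro he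
            have : (k : ℕ) + i₀ = (j : ℕ) := congrArg Fin.val he
            omega
          simp [Matrix.one_apply, this]
      calc M.rank = _ := by rw [hfac]
        _ ≤ ((1 : Matrix (Fin d) (Fin d) ℝ).submatrix g id).rank := Matrix.rank_mul_le_right _ _
        _ ≤ Fintype.card (Fin (d - (i₀:ℕ))) := Matrix.rank_le_card_height _
        _ = d - (i₀:ℕ) := Fintype.card_fin _
    exact le_antisymm hup hlow
  · intro hw
    have : convSame d w = 0 := by
      ext i j
      simp [convSame, hw]
    rw [this, Matrix.rank_zero]
end

section
/- Let σ : ℝ → ℝ be real analytic with nonnegative integers l_1 < l_2 < … < l_n forming an arithmetic progression and σ^{(l_i)}(0) ≠ 0 for all i. Let X ∈ ℝ^{d×n} be such that for every feature index k ∈ {1,…,d}, the absolute values |X_{k,1}|,…,|X_{k,n}| are pairwise distinct and all nonzero. Fix a support pattern S ⊆ {1,…,p}×{1,…,d} such that every row index i has at least one j with (i,j) ∈ S, and suppose p ≥ n. Then the sparse-dense nonlinear loss L(U, W) = (1/2)‖U σ(W X) − Y‖_F², over dense U ∈ ℝ^{d_y×p} and W supported on S, has no spurious valleys, and inf L = 0.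 -/
open scoped BigOperators Matrix

/-- The masked weight matrix built from the values `f` on the support pattern `S`. -/
noncomputable def maskedMatrix {p d : ℕ} (S : Finset (Fin p × Fin d)) (f : ↥S → ℝ) :
    Matrix (Fin p) (Fin d) ℝ :=
  Matrix.of fun i j => if h : (i, j) ∈ S then f ⟨(i, j), h⟩ else 0

lemma sum_deriv_zero {n : ℕ} (σ : ℝ → ℝ) (hσ : AnalyticOnNhd ℝ σ Set.univ)
    (x y : Fin n → ℝ) (h : ∀ t : ℝ, ∑ k, y k * σ (x k * t) = 0) (m : ℕ) :
    ∑ k, y k * (x k ^ m * iteratedDeriv m σ 0) = 0 := by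
  have hσC : ContDiff ℝ m σ := hσ.contDiff
  have hC : ∀ k : Fin n, ContDiff ℝ m (fun t => σ (x k * t)) :=
    fun k => hσC.comp (contDiff_const.mul contDiff_id)
  have hg : (fun t : ℝ => ∑ k, y k * σ (x k * t)) = fun _ => (0:ℝ) := funext h
  have h0 : iteratedDeriv m (fun t : ℝ => ∑ k, y k * σ (x k * t)) 0 = 0 := by
    rw [hg, iteratedDeriv_eq_iteratedFDeriv, iteratedFDeriv_zero_fun]
    simp
  have hsum : iteratedFDeriv ℝ m (fun t : ℝ => ∑ k, y k * σ (x k * t)) =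
      ∑ k, iteratedFDeriv ℝ m (fun t => y k * σ (x k * t)) :=
    iteratedFDeriv_sum (fun k _ => contDiff_const.mul (hC k))
  rw [iteratedDeriv_eq_iteratedFDeriv, hsum, Finset.sum_apply,
    ContinuousMultilinearMap.sum_apply] at h0
  refine Eq.trans (Finset.sum_congr rfl (fun k _ => ?_)) h0
  have h1 : iteratedFDeriv ℝ m (fun t => y k * σ (x k * t)) 0 =
      y k • iteratedFDeriv ℝ m (fun t => σ (x k * t)) 0 :=
    by simpa only [smul_eq_mul] using iteratedFDeriv_const_smul_apply' (a := y k) (hC k).contDiffAt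
  have h2 : iteratedDeriv m (fun t => σ (x k * t)) 0 = x k ^ m * iteratedDeriv m σ (x k * 0) :=
    congrFun (iteratedDeriv_comp_const_mul hσC (x k)) 0
  rw [iteratedDeriv_eq_iteratedFDeriv, mul_zero] at h2
  rw [h1, ContinuousMultilinearMap.smul_apply, smul_eq_mul, h2]

lemma vandermonde_inj {n : ℕ} (l : Fin n → ℕ) (hmono : StrictMono l)
    (c : ℕ) (harith : ∀ i : Fin n, ∀ h : (i : ℕ) + 1 < n, l ⟨(i : ℕ) + 1, h⟩ = l i + c)
    (x : Fin n → ℝ) (hnz : ∀ k, x k ≠ 0) (hdist : ∀ k k', k ≠ k' → |x k| ≠ |x k'|)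
    (y : Fin n → ℝ) (hy : ∀ i, ∑ k, x k ^ (l i) * y k = 0) : y = 0 := by
  rcases Nat.eq_zero_or_pos n with hn | hn
  · subst hn; funext k; exact k.elim0
  have l0 := l ⟨0, hn⟩
  have hl : ∀ i : Fin n, l i = l ⟨0, hn⟩ + c * i := by
    rintro ⟨m, hm⟩
    induction m with
    | zero => simp
    | succ a ih =>
      have ha : a < n := Nat.lt_of_succ_lt hm
      have h1 := harith ⟨a, ha⟩ (by simpa using hm)
      simp only at h1
      rw [h1, ih ha]
      ring
  set u : Fin n → ℝ := fun k => x k ^ c with hu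
  have huinj : Function.Injective u := by
    intro k k' heq
    by_contra hkk
    rcases Nat.eq_zero_or_pos c with hc0 | hcpos
    · -- c = 0 forces n ≤ 1, but k ≠ k'
      have h2 : 1 < n := by
        rcases lt_or_ge 1 n with h | h
        · exact h
        · exfalso; apply hkk
          have := k.isLt; have := k'.isLt
          exact Fin.ext (by omega)
      have hn2 := harith ⟨0, hn⟩ (by simpa using h2)
      have hlt := hmono (show (⟨0, hn⟩ : Fin n) < ⟨1, h2⟩ from by simp [Fin.lt_def])
      have heq1 : (⟨((⟨0, hn⟩ : Fin n) : ℕ) + 1, by simpa using h2⟩ : Fin n) = ⟨1, h2⟩ := by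
        apply Fin.ext; simp
      rw [heq1] at hn2
      omega
    · have habs : |x k| ^ c = |x k'| ^ c := by
        rw [← abs_pow, ← abs_pow, hu] at *
        simp only [hu] at heq
        rw [heq]
      exact hdist k k' hkk ((pow_left_inj₀ (abs_nonneg _) (abs_nonneg _) hcpos.ne').mp habs)
  set M : Matrix (Fin n) (Fin n) ℝ := Matrix.of fun i k => x k ^ (l i) with hM
  have hdet : M.det ≠ 0 := by
    have hMeq : M = Matrix.of fun i j => (x j ^ l ⟨0, hn⟩) * ((Matrix.vandermonde u)ᵀ i j) := by
      ext i j
      simp only [hM, Matrix.of_apply, Matrix.transpose_apply, Matrix.vandermonde_apply, hu]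
      rw [hl i, pow_add, pow_mul]
    rw [hMeq, Matrix.det_mul_row]
    apply mul_ne_zero
    · exact Finset.prod_ne_zero_iff.mpr fun k _ => pow_ne_zero _ (hnz k)
    · rw [Matrix.det_transpose]
      exact Matrix.det_vandermonde_ne_zero_iff.mpr huinj
  apply Matrix.eq_zero_of_mulVec_eq_zero hdet
  funext i
  simpa [Matrix.mulVec, dotProduct, hM] using hy i

lemma escape_lemma {n : ℕ} (σ : ℝ → ℝ) (hσ : AnalyticOnNhd ℝ σ Set.univ)
    (l : Fin n → ℕ) (hmono : StrictMono l)
    (c : ℕ) (harith : ∀ i : Fin n, ∀ h : (i : ℕ) + 1 < n, l ⟨(i : ℕ) + 1, h⟩ = l i + c)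
    (hder : ∀ i, iteratedDeriv (l i) σ 0 ≠ 0)
    (x : Fin n → ℝ) (hnz : ∀ k, x k ≠ 0) (hdist : ∀ k k', k ≠ k' → |x k| ≠ |x k'|)
    (V : Submodule ℝ (Fin n → ℝ)) (hV : V ≠ ⊤) :
    ∃ t : ℝ, (fun k => σ (t * x k)) ∉ V := by
  by_contra hall
  push_neg at hall
  obtain ⟨φ, hφ0, hφ⟩ :=
    Submodule.exists_dual_map_eq_bot_of_lt_top (lt_top_iff_ne_top.2 hV) inferInstance
  set y : Fin n → ℝ := fun k => φ (Pi.single k 1) with hy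
  have hphi : ∀ v : Fin n → ℝ, φ v = ∑ k, v k * y k := by
    intro v
    have hv : v = ∑ k, (v k) • (Pi.single k (1:ℝ) : Fin n → ℝ) := by
      funext j
      rw [Finset.sum_apply]
      simp [Pi.single_apply, Finset.sum_ite_eq']
    conv_lhs => rw [hv]
    rw [map_sum]
    exact Finset.sum_congr rfl fun k _ => by rw [map_smul, smul_eq_mul]
  have hzero : ∀ t : ℝ, ∑ k, y k * σ (x k * t) = 0 := by
    intro t
    have hm : (fun k => σ (t * x k)) ∈ V := hall t
    have h1 : φ (fun k => σ (t * x k)) = 0 := by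
      have h2 : φ (fun k => σ (t * x k)) ∈ V.map φ := Submodule.mem_map_of_mem hm
      rw [hφ] at h2
      simpa using h2
    rw [hphi] at h1
    rw [← h1]
    exact Finset.sum_congr rfl fun k _ => by rw [mul_comm (x k) t, mul_comm]
  have hkey : ∀ i, ∑ k, x k ^ (l i) * y k = 0 := by
    intro i
    have h1 := sum_deriv_zero σ hσ x y hzero (l i)
    have h2 : (∑ k, x k ^ (l i) * y k) * iteratedDeriv (l i) σ 0 = 0 := by
      rw [Finset.sum_mul]
      exact (Finset.sum_congr rfl fun k _ => by ring).trans h1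
    exact (mul_eq_zero.mp h2).resolve_right (hder i)
  have hy0 : y = 0 := vandermonde_inj l hmono c harith x hnz hdist y hkey
  apply hφ0
  apply LinearMap.ext
  intro v
  rw [hphi, hy0]
  simp

/-- Let `σ` be real analytic with `σ^{(lᵢ)}(0) ≠ 0` for an arithmetic
progression `l₁ < … < lₙ`, and let `X` have, in each feature row, pairwise distinct nonzero
absolute values. If every row of the support pattern `S` is nonempty and `p ≥ n`, then the
sparse-dense nonlinear loss `L(U, W) = (1/2)‖U σ(W X) − Y‖_F²` (dense `U`, `W` supported
on `S`) has no spurious valleys, and `inf L = 0`. -/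
theorem sd_nonlinear_analytic_no_spurious_valleys
    (p d n dy : ℕ) (σ : ℝ → ℝ)
    (hσ : AnalyticOnNhd ℝ σ Set.univ)
    (l : Fin n → ℕ) (hmono : StrictMono l)
    (c : ℕ) (harith : ∀ i : Fin n, ∀ h : (i : ℕ) + 1 < n, l ⟨(i : ℕ) + 1, h⟩ = l i + c)
    (hder : ∀ i, iteratedDeriv (l i) σ 0 ≠ 0)
    (X : Matrix (Fin d) (Fin n) ℝ) (Y : Matrix (Fin dy) (Fin n) ℝ)
    (hXnz : ∀ (k : Fin d) (j : Fin n), X k j ≠ 0)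
    (hXdist : ∀ (k : Fin d) (j j' : Fin n), j ≠ j' → |X k j| ≠ |X k j'|)
    (S : Finset (Fin p × Fin d))
    (hS : ∀ i : Fin p, ∃ j, (i, j) ∈ S)
    (hpn : n ≤ p)
    (L : ((Fin dy → Fin p → ℝ) × (↥S → ℝ)) → ℝ)
    (hL : ∀ θ, L θ = (1 / 2) * frobSq
      (Matrix.of θ.1 * (maskedMatrix S θ.2 * X).map σ - Y)) :
    (∀ (α : ℝ) θ0, L θ0 ≤ α →
      ¬ (⨅ θ, L θ) < sInf (L '' pathComponentIn {θ | L θ ≤ α} θ0)) ∧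
    (⨅ θ, L θ) = 0 := by
  classical
  set A : (↥S → ℝ) → Matrix (Fin p) (Fin n) ℝ := fun f => (maskedMatrix S f * X).map σ with hA
  set Vs : (↥S → ℝ) → Submodule ℝ (Fin n → ℝ) :=
    fun f => Submodule.span ℝ (Set.range fun i => A f i) with hVs
  have hLval : ∀ (U : Fin dy → Fin p → ℝ) (f : ↥S → ℝ),
      L (U, f) = 1 / 2 * frobSq (Matrix.of U * A f - Y) := fun U f => hL (U, f)
  have frob_nonneg : ∀ (M : Matrix (Fin dy) (Fin n) ℝ), 0 ≤ frobSq M := by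
    intro M
    simp only [frobSq]
    positivity
  have hLnonneg : ∀ θ, 0 ≤ L θ := by
    intro θ
    rw [hL θ]
    have := frob_nonneg (Matrix.of θ.1 * (maskedMatrix S θ.2 * X).map σ - Y)
    linarith
  have key : ∀ (α : ℝ) (θ0 : (Fin dy → Fin p → ℝ) × (↥S → ℝ)), L θ0 ≤ α →
      ∃ θs, JoinedIn {θ | L θ ≤ α} θ0 θs ∧ L θs = 0 := by
    intro α θ0 hθ0
    have seg : ∀ a b : (Fin dy → Fin p → ℝ) × (↥S → ℝ),
        (∀ s : ℝ, 0 ≤ s → s ≤ 1 → L ((1 - s) • a + s • b) ≤ α) →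
        JoinedIn {θ | L θ ≤ α} a b := by
      intro a b hb
      have hcont : Continuous fun t : unitInterval => (1 - (t : ℝ)) • a + (t : ℝ) • b := by
        fun_prop
      refine ⟨⟨⟨fun t => (1 - (t : ℝ)) • a + (t : ℝ) • b, hcont⟩, ?_, ?_⟩, ?_⟩
      · simp
      · simp
      · intro t
        exact hb t t.2.1 t.2.2
    have hcomb : ∀ (g : ↥S → ℝ) (s : ℝ), (1 - s) • g + s • g = g := by
      intro g s; rw [← add_smul]; norm_num
    have hcombU : ∀ (U : Fin dy → Fin p → ℝ) (s : ℝ), (1 - s) • U + s • U = U := by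
      intro U s; rw [← add_smul]; norm_num
    have hpair : ∀ (U U' : Fin dy → Fin p → ℝ) (f f' : ↥S → ℝ) (s : ℝ),
        (1 - s) • ((U, f) : (Fin dy → Fin p → ℝ) × (↥S → ℝ)) + s • ((U', f'))
          = ((1 - s) • U + s • U', (1 - s) • f + s • f') := by
      intros; rfl
    have hofmul : ∀ (s : ℝ) (U U' : Fin dy → Fin p → ℝ) (f : ↥S → ℝ),
        Matrix.of ((1 - s) • U + s • U') * A f
          = (1 - s) • (Matrix.of U * A f) + s • (Matrix.of U' * A f) := by
      intro s U U' f
      rw [show Matrix.of ((1 - s) • U + s • U')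
          = (1 - s) • Matrix.of U + s • Matrix.of U' from rfl]
      rw [Matrix.add_mul, Matrix.smul_mul, Matrix.smul_mul]
    have main : ∀ (m : ℕ) (θ : (Fin dy → Fin p → ℝ) × (↥S → ℝ)), L θ ≤ α →
        n ≤ Module.finrank ℝ (Vs θ.2) + m →
        ∃ θ', JoinedIn {θ | L θ ≤ α} θ θ' ∧ L θ' ≤ L θ ∧ Vs θ'.2 = ⊤ := by
      intro m
      induction m with
      | zero =>
        intro θ hθ hrk
        refine ⟨θ, JoinedIn.refl hθ, le_refl _, ?_⟩
        have h1 : Module.finrank ℝ (Vs θ.2) ≤ Module.finrank ℝ (Fin n → ℝ) :=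
          Submodule.finrank_le _
        rw [Module.finrank_fintype_fun_eq_card, Fintype.card_fin] at h1
        apply Submodule.eq_top_of_finrank_eq
        rw [Module.finrank_fintype_fun_eq_card, Fintype.card_fin]
        omega
      | succ m IH =>
        intro θ hθ hrk
        obtain ⟨U, f⟩ := θ
        dsimp only at hθ hrk
        by_cases htop : Vs f = ⊤
        · exact ⟨(U, f), JoinedIn.refl hθ, le_refl _, htop⟩
        have hnotind : ¬ LinearIndependent ℝ (fun i => A f i) := by
          intro hind
          have hple := hind.fintype_card_le_finrank
          rw [Module.finrank_fintype_fun_eq_card, Fintype.card_fin, Fintype.card_fin] at hple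
          have hsp : Module.finrank ℝ (Vs f) = p :=
            (finrank_span_eq_card hind).trans (Fintype.card_fin p)
          apply htop
          apply Submodule.eq_top_of_finrank_eq
          rw [Module.finrank_fintype_fun_eq_card, Fintype.card_fin]
          omega
        have hex : ∃ i0 : Fin p,
            A f i0 ∈ Submodule.span ℝ ((fun i => A f i) '' (Set.univ \ {i0})) := by
          by_contra hno
          push_neg at hno
          exact hnotind (linearIndependent_iff_notMem_span.mpr hno)
        obtain ⟨i0, hi0⟩ := hex
        have himg : (fun i => A f i) '' (Set.univ \ {i0}) =
            Set.range (fun i : {i : Fin p // i ≠ i0} => A f i) := by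
          ext v
          constructor
          · rintro ⟨i, ⟨-, hi⟩, rfl⟩
            exact ⟨⟨i, by simpa using hi⟩, rfl⟩
          · rintro ⟨⟨i, hi⟩, rfl⟩
            exact ⟨i, ⟨trivial, by simpa using hi⟩, rfl⟩
        rw [himg, Submodule.mem_span_range_iff_exists_fun] at hi0
        obtain ⟨cs, hcs⟩ := hi0
        set cb : Fin p → ℝ := fun i => if h : i = i0 then 0 else cs ⟨i, h⟩ with hcb
        have hcb0 : cb i0 = 0 := by simp [hcb]
        have hcsum : ∑ i, cb i • A f i = A f i0 := by
          rw [Finset.sum_eq_sum_sdiff_singleton_add (Finset.mem_univ i0), hcb0]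
          rw [Finset.sum_subtype (Finset.univ \ {i0}) (p := fun i => i ≠ i0)
            (by simp) (fun i => cb i • A f i)]
          rw [← hcs]
          simp only [zero_smul, add_zero]
          refine Finset.sum_congr rfl fun i _ => ?_
          congr 1
          rw [hcb]
          exact dif_neg i.2
        set U' : Fin dy → Fin p → ℝ :=
          fun b i => if i = i0 then 0 else U b i + cb i * U b i0 with hU'
        have hU'col : ∀ b, U' b i0 = 0 := by intro b; simp [hU']
        have hU'A : Matrix.of U' * A f = Matrix.of U * A f := by
          ext b k
          rw [Matrix.mul_apply, Matrix.mul_apply]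
          have hAk : ∑ i, cb i * A f i k = A f i0 k := by
            have h2 := congrFun hcsum k
            rw [Finset.sum_apply] at h2
            simpa using h2
          have hsplit : ∀ i : Fin p, Matrix.of U' b i * A f i k
              = (U b i * A f i k + (cb i * A f i k) * U b i0)
                - (if i = i0 then U b i0 * A f i k else 0) := by
            intro i
            by_cases hi : i = i0
            · subst hi
              simp [hU', hcb0]
            · simp only [Matrix.of_apply, hU', if_neg hi]
              ring
          rw [Finset.sum_congr rfl fun i _ => hsplit i]
          rw [Finset.sum_sub_distrib, Finset.sum_add_distrib, ← Finset.sum_mul,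
            Finset.sum_ite_eq' Finset.univ i0 (fun i => U b i0 * A f i k), hAk]
          simp only [Finset.mem_univ, if_pos, Matrix.of_apply]
          ring
        have hL1 : ∀ s : ℝ, L ((1 - s) • U + s • U', f) = L (U, f) := by
          intro s
          rw [hLval, hLval, hofmul, hU'A, ← add_smul]
          norm_num
        have hseg1 : JoinedIn {θ | L θ ≤ α} (U, f) (U', f) := by
          apply seg
          intro s h0 h1
          rw [hpair, hcomb, hL1 s]
          exact hθ
        obtain ⟨j0, hj0⟩ := hS i0
        obtain ⟨τ, hτ⟩ := escape_lemma σ hσ l hmono c harith hder (fun k => X j0 k)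
          (fun k => hXnz j0 k) (fun k k' hk => hXdist j0 k k' hk) (Vs f) htop
        set f' : ↥S → ℝ := fun e => if (e : Fin p × Fin d).1 = i0
            then (if (e : Fin p × Fin d).2 = j0 then τ else 0) else f e with hf'
        have hf'off : ∀ e : ↥S, (e : Fin p × Fin d).1 ≠ i0 → f' e = f e := by
          intro e he
          rw [hf']
          simp [he]
        have hrowAgree : ∀ (g g' : ↥S → ℝ) (i : Fin p),
            (∀ (j : Fin d) (h : (i, j) ∈ S), g ⟨(i, j), h⟩ = g' ⟨(i, j), h⟩) →
            A g i = A g' i := by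
          intro g g' i hgg
          funext k
          show σ ((maskedMatrix S g * X) i k) = σ ((maskedMatrix S g' * X) i k)
          congr 1
          rw [Matrix.mul_apply, Matrix.mul_apply]
          refine Finset.sum_congr rfl fun j _ => ?_
          congr 1
          show (if h : (i, j) ∈ S then g ⟨(i, j), h⟩ else 0)
            = (if h : (i, j) ∈ S then g' ⟨(i, j), h⟩ else 0)
          split
          · exact hgg j ‹_›
          · rfl
        have hArow_i0 : A f' i0 = fun k => σ (τ * X j0 k) := by
          funext k
          show σ ((maskedMatrix S f' * X) i0 k) = σ (τ * X j0 k)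
          congr 1
          rw [Matrix.mul_apply]
          have hentry : ∀ j : Fin d, maskedMatrix S f' i0 j = if j = j0 then τ else 0 := by
            intro j
            show (if h : (i0, j) ∈ S then f' ⟨(i0, j), h⟩ else 0) = _
            by_cases hj : j = j0
            · subst hj
              rw [dif_pos hj0, if_pos rfl, hf']
              simp
            · rw [if_neg hj]
              split
              · rw [hf']
                simp [hj]
              · rfl
          calc ∑ j, maskedMatrix S f' i0 j * X j k
              = ∑ j, (if j = j0 then τ * X j k else 0) := by
                refine Finset.sum_congr rfl fun j _ => ?_
                rw [hentry j]
                split <;> simp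
            _ = τ * X j0 k := by simp
        have hprodU' : ∀ g : ↥S → ℝ, (∀ e : ↥S, (e : Fin p × Fin d).1 ≠ i0 → g e = f e) →
            Matrix.of U' * A g = Matrix.of U' * A f := by
          intro g hg
          ext b k
          rw [Matrix.mul_apply, Matrix.mul_apply]
          refine Finset.sum_congr rfl fun i _ => ?_
          by_cases hi : i = i0
          · subst hi
            show U' b i * A g i k = U' b i * A f i k
            rw [hU'col b]
            simp
          · have hAi : A g i = A f i := hrowAgree g f i (fun j h => hg ⟨(i, j), h⟩ hi)
            show U' b i * A g i k = U' b i * A f i k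
            rw [hAi]
        have hfs_off : ∀ (s : ℝ) (e : ↥S), (e : Fin p × Fin d).1 ≠ i0 →
            ((1 - s) • f + s • f') e = f e := by
          intro s e he
          show (1 - s) * f e + s * f' e = f e
          rw [hf'off e he]
          ring
        have hL2 : ∀ s : ℝ, L (U', (1 - s) • f + s • f') = L (U', f) := by
          intro s
          rw [hLval, hLval, hprodU' _ (hfs_off s)]
        have hLU'f : L (U', f) = L (U, f) := by rw [hLval, hLval, hU'A]
        have hseg2 : JoinedIn {θ | L θ ≤ α} (U', f) (U', f') := by
          apply seg
          intro s h0 h1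
          rw [hpair, hcombU, hL2 s, hLU'f]
          exact hθ
        have hLf' : L (U', f') = L (U, f) := by
          rw [hLval, hLval, hprodU' f' (fun e he => hf'off e he), hU'A]
        have hVle : Vs f ≤ Vs f' := by
          apply Submodule.span_le.mpr
          rintro v ⟨i, rfl⟩
          show A f i ∈ (Vs f' : Set (Fin n → ℝ))
          by_cases hi : i = i0
          · rw [hi, ← hcsum]
            apply Submodule.sum_mem
            intro i' _
            by_cases hii : i' = i0
            · rw [hii, hcb0]
              simp
            · apply Submodule.smul_mem
              rw [hrowAgree f f' i' (fun j h => (hf'off ⟨(i', j), h⟩ hii).symm)]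
              exact Submodule.subset_span ⟨i', rfl⟩
          · rw [hrowAgree f f' i (fun j h => (hf'off ⟨(i, j), h⟩ hi).symm)]
            exact Submodule.subset_span ⟨i, rfl⟩
        have hwmem : (fun k => σ (τ * X j0 k)) ∈ Vs f' := by
          rw [← hArow_i0]
          exact Submodule.subset_span ⟨i0, rfl⟩
        have hlt : Vs f < Vs f' := lt_of_le_of_ne hVle (by
          intro he
          rw [he] at hτ
          exact hτ hwmem)
        have hfr : Module.finrank ℝ (Vs f) < Module.finrank ℝ (Vs f') :=
          Submodule.finrank_lt_finrank_of_lt hlt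
        have hLθ'' : L (U', f') ≤ α := by rw [hLf']; exact hθ
        obtain ⟨θ', hJ, hle, htop'⟩ := IH (U', f') hLθ'' (by dsimp only; omega)
        exact ⟨θ', (hseg1.trans hseg2).trans hJ,
          le_trans hle (le_of_eq hLf'), htop'⟩
    obtain ⟨θ1, hJ1, hle1, htop1⟩ := main n θ0 hθ0 (Nat.le_add_left n _)
    have hmem : ∀ b : Fin dy, ∃ cb : Fin p → ℝ, ∑ i, cb i • A θ1.2 i = fun k => Y b k := by
      intro b
      have hmem2 : (fun k => Y b k) ∈ Vs θ1.2 := by rw [htop1]; trivial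
      exact (Submodule.mem_span_range_iff_exists_fun ℝ).mp hmem2
    choose Us hUs using hmem
    have hprodY : Matrix.of Us * A θ1.2 = Y := by
      ext b k
      rw [Matrix.mul_apply]
      have h3 := congrFun (hUs b) k
      rw [Finset.sum_apply] at h3
      simpa using h3
    have hfrobsmul : ∀ (a : ℝ) (M : Matrix (Fin dy) (Fin n) ℝ),
        frobSq (a • M) = a ^ 2 * frobSq M := by
      intro a M
      simp [frobSq, Matrix.smul_apply, smul_eq_mul, mul_pow, Finset.mul_sum]
    have hseg3 : JoinedIn {θ | L θ ≤ α} θ1 (Us, θ1.2) := by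
      apply seg
      intro s h0 h1
      rw [hpair, hcomb]
      show L ((1 - s) • θ1.1 + s • Us, θ1.2) ≤ α
      rw [hLval, hofmul, hprodY]
      have hmat : (1 - s) • (Matrix.of θ1.1 * A θ1.2) + s • Y - Y
          = (1 - s) • (Matrix.of θ1.1 * A θ1.2 - Y) := by
        ext b k
        simp only [Matrix.sub_apply, Matrix.add_apply, Matrix.smul_apply, smul_eq_mul]
        ring
      rw [hmat, hfrobsmul]
      have hLθ1 : L θ1 = 1 / 2 * frobSq (Matrix.of θ1.1 * A θ1.2 - Y) := hL θ1
      have hb : (1 - s) ^ 2 ≤ 1 := by nlinarith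
      have hnn : 0 ≤ frobSq (Matrix.of θ1.1 * A θ1.2 - Y) := frob_nonneg _
      have hfin : 1 / 2 * ((1 - s) ^ 2 * frobSq (Matrix.of θ1.1 * A θ1.2 - Y)) ≤ L θ1 := by
        rw [hLθ1]
        nlinarith
      exact le_trans hfin (le_trans hle1 hθ0)
    have hLend : L (Us, θ1.2) = 0 := by
      rw [hLval, hprodY]
      simp [frobSq]
    exact ⟨(Us, θ1.2), hJ1.trans hseg3, hLend⟩
  constructor
  · intro α θ0 hθ0 hlt
    obtain ⟨θs, hJ, hLs⟩ := key α θ0 hθ0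
    have hmem : θs ∈ pathComponentIn {θ | L θ ≤ α} θ0 := hJ
    have h1 : sInf (L '' pathComponentIn {θ | L θ ≤ α} θ0) ≤ 0 := by
      apply csInf_le
      · refine ⟨0, ?_⟩
        rintro z ⟨θ, -, rfl⟩
        exact hLnonneg θ
      · exact ⟨θs, hmem, hLs⟩
    have h2 : 0 ≤ ⨅ θ, L θ := le_ciInf hLnonneg
    linarith
  · obtain ⟨θs, -, hLs⟩ := key (L ((fun _ _ => 0), (fun _ => 0)))
      ((fun _ _ => 0), (fun _ => 0)) (le_refl _)
    refine le_antisymm ?_ (le_ciInf hLnonneg)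
    calc (⨅ θ, L θ) ≤ L θs := by
          apply ciInf_le
          refine ⟨0, ?_⟩
          rintro z ⟨θ, rfl⟩
          exact hLnonneg θ
      _ = 0 := hLs
end
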